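/- arXiv:1510.01616 — 6 statements merged into one kernel-verified Lean document; each statement's English description precedes it below -/
import Mathlib

section
/- If the supremum defining a tropical power series T(x) = sup_{j ∈ E} (b_j + j·x) is finite at every point x ∈ ℝ, then for each x the supremum is attained, i.e., there exists j ∈ E with T(x) = b_j + j·x. -/
/-!
Finiteness of the supremum at slope `x + 1` bounds the terms by `b j + j x ≤ M - j` on `E`, so
along `E` they tend to `-∞`; hence only finitely many of them exceed any given term, and a largest
term exists.
-/

open Filter

lemma tendsto_natCast_subtype_cofinite_atTop (E : Set ℕ) :
    Tendsto (fun j : E => (j : ℝ)) cofinite atTop :=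
  tendsto_natCast_atTop_atTop.comp (Nat.cofinite_eq_atTop ▸ Subtype.val_injective.tendsto_cofinite)

lemma tendsto_add_mul_cofinite_atBot_of_bddAbove {E : Set ℕ} {b : ℕ → ℝ} {x y : ℝ} (hxy : x < y)
    (hbdd : BddAbove ((fun j : ℕ => b j + j * y) '' E)) :
    Tendsto (fun j : E => b j + j * x) cofinite atBot := by
  obtain ⟨M, hM⟩ := hbdd
  have hle : ∀ j : E, b j + j * x ≤ M - (y - x) * j := fun j => by
    have := hM ⟨j, j.2, rfl⟩
    linarith
  refine tendsto_atBot_mono hle (tendsto_atBot_add_const_left _ M ?_)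
  exact tendsto_neg_atTop_atBot.comp
    ((tendsto_natCast_subtype_cofinite_atTop E).const_mul_atTop (sub_pos.2 hxy))

lemma exists_isGreatest_image_of_tendsto_cofinite_atBot {α β : Type*} [LinearOrder β]
    {E : Set α} (hE : E.Nonempty) {f : α → β}
    (hf : Tendsto (fun j : E => f j) cofinite atBot) : ∃ j ∈ E, IsGreatest (f '' E) (f j) := by
  have : Nonempty E := hE.to_subtype
  obtain ⟨⟨j, hj⟩, hmax⟩ := hf.exists_forall_ge
  exact ⟨j, hj, Set.mem_image_of_mem f hj, Set.forall_mem_image.2 fun i hi => hmax ⟨i, hi⟩⟩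

/-- If the supremum defining a tropical power series
`T(x) = sup_{j ∈ E} (b_j + j·x)` is finite at every point `x ∈ ℝ`, then for each `x`
the supremum is attained: there exists `j ∈ E` with `T(x) = b_j + j·x`. -/
theorem tropical_power_series_sup_attained (E : Set ℕ) (hE : E.Nonempty) (b : ℕ → ℝ)
    (hfin : ∀ x : ℝ, BddAbove ((fun j : ℕ => b j + j * x) '' E)) :
    ∀ x : ℝ, ∃ j ∈ E,
      sSup ((fun j : ℕ => b j + j * x) '' E) = b j + j * x := by
  intro x
  obtain ⟨j, hj, hgreatest⟩ :=
    exists_isGreatest_image_of_tendsto_cofinite_atBot (f := fun j : ℕ => b j + j * x) hE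
      (tendsto_add_mul_cofinite_atBot_of_bddAbove (lt_add_one x) (hfin (x + 1)))
  exact ⟨j, hj, hgreatest.csSup_eq⟩
end

section
/- Let w : [0,∞) → (0,∞) be a weight. If w is approximable from below by monomials, i.e., w(t) ≤ C·P_w(t) for all t ≥ 0 and some constant C > 1, then w is equivalent to a log-tropical weight function; conversely, if w is equivalent to a log-tropical weight then w(t) ≤ C·P_w(t) for some C and all t. -/
/-- A weight function on `[0,∞)`: positive, non-decreasing, continuous, unbounded. -/
def IsWeight (w : ℝ → ℝ) : Prop :=
  (∀ t : ℝ, 0 ≤ t → 0 < w t) ∧ MonotoneOn w (Set.Ici 0) ∧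
    ContinuousOn w (Set.Ici 0) ∧ ∀ M : ℝ, ∃ t : ℝ, 0 ≤ t ∧ M < w t

/-- `v` is log-tropical: `log v(e^x) = sup_{j ∈ E} (b_j + j x)` for some `E ⊆ ℕ`,
`b_j ∈ ℝ`, with the supremum finite for every `x`. -/
def LogTropical (v : ℝ → ℝ) : Prop :=
  ∃ (E : Set ℕ) (b : ℕ → ℝ), E.Nonempty ∧
    (∀ x : ℝ, BddAbove ((fun j : ℕ => b j + j * x) '' E)) ∧
    ∀ x : ℝ, Real.log (v (Real.exp x)) = sSup ((fun j : ℕ => b j + j * x) '' E)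

/-!
Since `t ^ k / u k ≤ w t` for every `k`, the envelope `P t = sup_k t ^ k / u k` lies below `w`,
and `log P (e ^ x) = sup_k (k x - log u k)` is log-tropical by construction. On `[0, T]` the
`k`-th term is at most `w (2T) 2⁻ᵏ`, so for large `k` it falls below the constant term `1 / u 0`;
hence `P` is locally a finite maximum of monomials, thus continuous, and `w ≤ C P` makes `P` a
weight equivalent to `w`.

Conversely, if `C₁ v ≤ w` with `v` log-tropical, each monomial `C₁ e^{b_j} t ^ j` under `C₁ v`
is a monomial minorant of `w`, which forces `u j ≤ (C₁ e^{b_j})⁻¹`, i.e. the monomial lies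
below `t ^ j / u j ≤ P t`. Taking the supremum over `j` gives `C₁ v ≤ P`, hence `w ≤ (C₂ / C₁) P`.
-/

open Set Filter Topology

section Order

variable {α : Type*} [ConditionallyCompleteLinearOrder α]

theorem ciSup_eq_sup'_range_of_le_apply_zero {f : ℕ → α} (hf : BddAbove (range f)) {N : ℕ}
    (hN : ∀ k, N ≤ k → f k ≤ f 0) :
    ⨆ k, f k = (Finset.range (N + 1)).sup' Finset.nonempty_range_add_one f := by
  refine le_antisymm (ciSup_le fun k => ?_) (Finset.sup'_le _ _ fun k _ => le_ciSup hf k)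
  rcases lt_or_ge k (N + 1) with hk | hk
  · exact Finset.le_sup' f (Finset.mem_range.2 hk)
  · exact (hN k (by omega)).trans (Finset.le_sup' f (Finset.mem_range.2 N.succ_pos))

theorem continuousOn_ciSup_of_le_apply_zero {X : Type*} [TopologicalSpace X] [TopologicalSpace α]
    [OrderTopology α] {f : ℕ → X → α} {s : Set X}
    (hf : ∀ k, Continuous (f k)) (hbdd : ∀ x ∈ s, BddAbove (range fun k => f k x)) {N : ℕ}
    (hN : ∀ k, N ≤ k → ∀ x ∈ s, f k x ≤ f 0 x) :
    ContinuousOn (fun x => ⨆ k, f k x) s :=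
  (Continuous.finset_sup'_apply Finset.nonempty_range_add_one fun k _ => hf k).continuousOn.congr
    fun x hx => ciSup_eq_sup'_range_of_le_apply_zero (hbdd x hx) fun k hk => hN k hk x hx

end Order

theorem le_on_Ici_of_le_on_Ioi {f g : ℝ → ℝ} {a : ℝ} (hf : ContinuousOn f (Ici a))
    (hg : ContinuousOn g (Ici a)) (h : ∀ x, a < x → f x ≤ g x) {x : ℝ} (hx : a ≤ x) :
    f x ≤ g x := by
  rw [← closure_Ioi] at hf hg
  exact le_on_closure h hf hg (show x ∈ closure (Ioi a) by rwa [closure_Ioi])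

theorem Real.exp_add_nat_mul_log (b : ℝ) (j : ℕ) {t : ℝ} (ht : 0 < t) :
    Real.exp (b + j * Real.log t) = Real.exp b * t ^ j := by
  rw [Real.exp_add, Real.exp_nat_mul, Real.exp_log ht]

def monomialRatios (w : ℝ → ℝ) (k : ℕ) : Set ℝ :=
  {y : ℝ | ∃ t : ℝ, 0 ≤ t ∧ y = t ^ k / w t}

noncomputable def monomialEnvelope (u : ℕ → ℝ) (t : ℝ) : ℝ :=
  ⨆ k : ℕ, t ^ k / u k

section MonomialEnvelope

variable {w : ℝ → ℝ} {u : ℕ → ℝ} {k : ℕ} {c t : ℝ}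

theorem pos_of_isLUB_monomialRatios (hw : ∀ t, 0 ≤ t → 0 < w t)
    (hc : IsLUB (monomialRatios w k) c) : 0 < c :=
  (div_pos one_pos (hw 1 zero_le_one)).trans_le (hc.1 ⟨1, zero_le_one, by rw [one_pow]⟩)

theorem pow_div_le_of_isLUB_monomialRatios (hw : ∀ t, 0 ≤ t → 0 < w t)
    (hc : IsLUB (monomialRatios w k) c) (ht : 0 ≤ t) :
    t ^ k / c ≤ w t := by
  rw [div_le_iff₀ (pos_of_isLUB_monomialRatios hw hc), mul_comm]
  exact (div_le_iff₀ (hw t ht)).1 (hc.1 ⟨t, ht, rfl⟩)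

theorem le_inv_of_isLUB_monomialRatios {a : ℝ} (hw : ∀ t, 0 ≤ t → 0 < w t)
    (hc : IsLUB (monomialRatios w k) c) (ha : 0 < a)
    (h : ∀ t, 0 ≤ t → a * t ^ k ≤ w t) : c ≤ a⁻¹ := by
  refine hc.2 ?_
  rintro _ ⟨t, ht, rfl⟩
  rw [div_le_iff₀ (hw t ht), inv_mul_eq_div, le_div_iff₀ ha, mul_comm]
  exact h t ht

theorem bddAbove_range_pow_div (hw : ∀ t, 0 ≤ t → 0 < w t)
    (hu : ∀ k, IsLUB (monomialRatios w k) (u k)) (ht : 0 ≤ t) :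
    BddAbove (range fun k => t ^ k / u k) :=
  ⟨w t, by rintro _ ⟨k, rfl⟩; exact pow_div_le_of_isLUB_monomialRatios hw (hu k) ht⟩

theorem monomialEnvelope_le (hw : ∀ t, 0 ≤ t → 0 < w t)
    (hu : ∀ k, IsLUB (monomialRatios w k) (u k)) (ht : 0 ≤ t) :
    monomialEnvelope u t ≤ w t :=
  ciSup_le fun k => pow_div_le_of_isLUB_monomialRatios hw (hu k) ht

theorem pow_div_le_monomialEnvelope (hw : ∀ t, 0 ≤ t → 0 < w t)
    (hu : ∀ k, IsLUB (monomialRatios w k) (u k)) (ht : 0 ≤ t) (k : ℕ) :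
    t ^ k / u k ≤ monomialEnvelope u t :=
  le_ciSup (bddAbove_range_pow_div hw hu ht) k

theorem monomialEnvelope_pos (hw : ∀ t, 0 ≤ t → 0 < w t)
    (hu : ∀ k, IsLUB (monomialRatios w k) (u k)) (ht : 0 ≤ t) :
    0 < monomialEnvelope u t :=
  (div_pos one_pos (pos_of_isLUB_monomialRatios hw (hu 0))).trans_le
    (by simpa using pow_div_le_monomialEnvelope hw hu ht 0)

theorem monotoneOn_monomialEnvelope (hw : ∀ t, 0 ≤ t → 0 < w t)
    (hu : ∀ k, IsLUB (monomialRatios w k) (u k)) :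
    MonotoneOn (monomialEnvelope u) (Ici 0) := fun _ hs _ ht hst =>
  ciSup_le fun k => (div_le_div_of_nonneg_right (pow_le_pow_left₀ hs hst k)
    (pos_of_isLUB_monomialRatios hw (hu k)).le).trans (pow_div_le_monomialEnvelope hw hu ht k)

theorem pow_div_le_mul_half_pow (hw : ∀ t, 0 ≤ t → 0 < w t)
    (hu : ∀ k, IsLUB (monomialRatios w k) (u k)) {T : ℝ} (hT : 0 < T)
    (ht₀ : 0 ≤ t) (htT : t ≤ T) (k : ℕ) :
    t ^ k / u k ≤ w (2 * T) * (1 / 2) ^ k := by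
  have hu2T := pow_div_le_of_isLUB_monomialRatios hw (hu k) (by positivity : 0 ≤ 2 * T)
  have hratio : t / (2 * T) ≤ 1 / 2 := by rw [div_le_iff₀ (by positivity)]; linarith
  calc t ^ k / u k = (t / (2 * T)) ^ k * ((2 * T) ^ k / u k) := by
        rw [div_pow]; field_simp
    _ ≤ (1 / 2) ^ k * w (2 * T) := by
        gcongr
        exact div_nonneg (by positivity) (pos_of_isLUB_monomialRatios hw (hu k)).le
    _ = w (2 * T) * (1 / 2) ^ k := mul_comm _ _

theorem continuousOn_monomialEnvelope (hw : ∀ t, 0 ≤ t → 0 < w t)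
    (hu : ∀ k, IsLUB (monomialRatios w k) (u k)) :
    ContinuousOn (monomialEnvelope u) (Ici 0) := by
  refine continuousOn_of_locally_continuousOn fun t₀ ht₀ =>
    ⟨Iio (t₀ + 1), isOpen_Iio, lt_add_one t₀, ?_⟩
  have hT : 0 < t₀ + 1 := by linarith [mem_Ici.1 ht₀]
  have htail : Tendsto (fun k : ℕ => w (2 * (t₀ + 1)) * (1 / 2) ^ k) atTop (𝓝 0) := by
    simpa using (tendsto_pow_atTop_nhds_zero_of_lt_one (by norm_num : (0 : ℝ) ≤ 1 / 2)
      (by norm_num)).const_mul (w (2 * (t₀ + 1)))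
  obtain ⟨N, hN⟩ := eventually_atTop.1
    (htail.eventually_lt_const (inv_pos.2 (pos_of_isLUB_monomialRatios hw (hu 0))))
  refine continuousOn_ciSup_of_le_apply_zero (f := fun k t => t ^ k / u k) (fun k => by fun_prop)
    (fun t ht => bddAbove_range_pow_div hw hu ht.1) (N := N) fun k hk t ht => ?_
  simpa using (pow_div_le_mul_half_pow hw hu hT ht.1 (le_of_lt ht.2) k).trans (hN k hk).le

theorem bddAbove_range_neg_log_add_mul (hw : ∀ t, 0 ≤ t → 0 < w t)
    (hu : ∀ k, IsLUB (monomialRatios w k) (u k)) (x : ℝ) :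
    BddAbove (range fun k : ℕ => -Real.log (u k) + k * x) := by
  refine ⟨Real.log (w (Real.exp x)), ?_⟩
  rintro _ ⟨k, rfl⟩
  rw [Real.le_log_iff_exp_le (hw _ (Real.exp_pos x).le), Real.exp_add, Real.exp_neg,
    Real.exp_log (pos_of_isLUB_monomialRatios hw (hu k)), Real.exp_nat_mul, inv_mul_eq_div]
  exact pow_div_le_of_isLUB_monomialRatios hw (hu k) (Real.exp_pos x).le

theorem log_monomialEnvelope_exp (hw : ∀ t, 0 ≤ t → 0 < w t)
    (hu : ∀ k, IsLUB (monomialRatios w k) (u k)) (x : ℝ) :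
    Real.log (monomialEnvelope u (Real.exp x)) = ⨆ k : ℕ, (-Real.log (u k) + k * x) := by
  have hterm (k : ℕ) : Real.exp (-Real.log (u k) + k * x) = Real.exp x ^ k / u k := by
    rw [Real.exp_add, Real.exp_neg, Real.exp_log (pos_of_isLUB_monomialRatios hw (hu k)),
      Real.exp_nat_mul, inv_mul_eq_div]
  simp only [monomialEnvelope, ← hterm]
  rw [← Real.exp_monotone.map_ciSup_of_continuousAt Real.continuous_exp.continuousAt
    (bddAbove_range_neg_log_add_mul hw hu x), Real.log_exp]

theorem logTropical_monomialEnvelope (hw : ∀ t, 0 ≤ t → 0 < w t)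
    (hu : ∀ k, IsLUB (monomialRatios w k) (u k)) :
    LogTropical (monomialEnvelope u) := by
  refine ⟨univ, fun k => -Real.log (u k), univ_nonempty, fun x => ?_, fun x => ?_⟩
  · rw [image_univ]
    exact bddAbove_range_neg_log_add_mul hw hu x
  · rw [image_univ, log_monomialEnvelope_exp hw hu]
    rfl

theorem isWeight_monomialEnvelope (hw : IsWeight w)
    (hu : ∀ k, IsLUB (monomialRatios w k) (u k)) {C : ℝ} (hC : 0 < C)
    (hwC : ∀ t, 0 ≤ t → w t ≤ C * monomialEnvelope u t) : IsWeight (monomialEnvelope u) := by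
  refine ⟨fun t ht => monomialEnvelope_pos hw.1 hu ht, monotoneOn_monomialEnvelope hw.1 hu,
    continuousOn_monomialEnvelope hw.1 hu, fun M => ?_⟩
  obtain ⟨t, ht, hMt⟩ := hw.2.2.2 (C * M)
  exact ⟨t, ht, lt_of_mul_lt_mul_left (hMt.trans_le (hwC t ht)) hC.le⟩

theorem mul_pow_le_monomialEnvelope (hw : ∀ t, 0 ≤ t → 0 < w t)
    (hu : ∀ k, IsLUB (monomialRatios w k) (u k)) {a : ℝ} (ha : 0 < a)
    (h : ∀ t, 0 ≤ t → a * t ^ k ≤ w t) (ht : 0 ≤ t) : a * t ^ k ≤ monomialEnvelope u t := by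
  calc a * t ^ k = t ^ k / a⁻¹ := by rw [div_inv_eq_mul, mul_comm]
    _ ≤ t ^ k / u k := div_le_div_of_nonneg_left (pow_nonneg ht k)
        (pos_of_isLUB_monomialRatios hw (hu k)) (le_inv_of_isLUB_monomialRatios hw (hu k) ha h)
    _ ≤ monomialEnvelope u t := pow_div_le_monomialEnvelope hw hu ht k

end MonomialEnvelope

section LogTropical

variable {v : ℝ → ℝ} {E : Set ℕ} {b : ℕ → ℝ} {t : ℝ}

theorem exp_mul_pow_le_of_log_eq_sSup (hbdd : ∀ x, BddAbove ((fun j : ℕ => b j + j * x) '' E))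
    (hlog : ∀ x, Real.log (v (Real.exp x)) = sSup ((fun j : ℕ => b j + j * x) '' E))
    (ht : 0 < t) (hvt : 0 < v t) {j : ℕ} (hj : j ∈ E) : Real.exp (b j) * t ^ j ≤ v t := by
  have h := le_csSup (hbdd (Real.log t)) (mem_image_of_mem _ hj)
  rw [← hlog, Real.exp_log ht] at h
  calc Real.exp (b j) * t ^ j = Real.exp (b j + j * Real.log t) :=
        (Real.exp_add_nat_mul_log _ _ ht).symm
    _ ≤ Real.exp (Real.log (v t)) := Real.exp_le_exp.2 h
    _ = v t := Real.exp_log hvt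

theorem le_of_log_eq_sSup (hE : E.Nonempty)
    (hlog : ∀ x, Real.log (v (Real.exp x)) = sSup ((fun j : ℕ => b j + j * x) '' E))
    (ht : 0 < t) (hvt : 0 < v t) {M : ℝ} (hM : 0 < M)
    (h : ∀ j ∈ E, Real.exp (b j) * t ^ j ≤ M) : v t ≤ M := by
  rw [← Real.exp_log hvt, ← Real.exp_log ht, hlog, ← Real.le_log_iff_exp_le hM]
  refine csSup_le (hE.image _) ?_
  rintro _ ⟨j, hj, rfl⟩
  rw [Real.le_log_iff_exp_le hM, Real.exp_add_nat_mul_log _ _ ht]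
  exact h j hj

theorem mul_le_monomialEnvelope_of_logTropical {w : ℝ → ℝ} {u : ℕ → ℝ}
    (hwpos : ∀ t, 0 ≤ t → 0 < w t) (hwcont : ContinuousOn w (Ici 0))
    (hu : ∀ k, IsLUB (monomialRatios w k) (u k)) (hv : LogTropical v)
    (hvpos : ∀ t, 0 < t → 0 < v t) {C₁ : ℝ} (hC₁ : 0 < C₁)
    (h₁ : ∀ t, 0 ≤ t → C₁ * v t ≤ w t) (ht : 0 < t) : C₁ * v t ≤ monomialEnvelope u t := by
  obtain ⟨E, b, hE, hbdd, hlog⟩ := hv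
  rw [← le_div_iff₀' hC₁]
  refine le_of_log_eq_sSup hE hlog ht (hvpos t ht)
    (div_pos (monomialEnvelope_pos hwpos hu ht.le) hC₁) fun j hj => ?_
  rw [le_div_iff₀' hC₁, ← mul_assoc]
  -- `hlog` only sees `t = exp x > 0`; continuity of `w` extends the bound to `t = 0`
  have hmono (s : ℝ) (hs : 0 ≤ s) : C₁ * Real.exp (b j) * s ^ j ≤ w s := by
    refine le_on_Ici_of_le_on_Ioi (f := fun s => C₁ * Real.exp (b j) * s ^ j) (by fun_prop)
      hwcont (fun s hs => ?_) hs
    rw [mul_assoc]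
    exact (mul_le_mul_of_nonneg_left (exp_mul_pow_le_of_log_eq_sSup hbdd hlog hs
      (hvpos s hs) hj) hC₁.le).trans (h₁ s hs.le)
  exact mul_pow_le_monomialEnvelope hwpos hu (by positivity) hmono ht.le

end LogTropical

theorem approximable_by_monomials_iff_logTropical_general (w : ℝ → ℝ) (hw : IsWeight w)
    (u : ℕ → ℝ)
    (hu : ∀ k : ℕ, IsLUB {y : ℝ | ∃ t : ℝ, 0 ≤ t ∧ y = t ^ k / w t} (u k)) :
    (∃ C : ℝ, 1 < C ∧ ∀ t : ℝ, 0 ≤ t → w t ≤ C * ⨆ k : ℕ, t ^ k / u k) ↔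
      ∃ v : ℝ → ℝ, IsWeight v ∧ LogTropical v ∧
        ∃ C₁ C₂ : ℝ, 0 < C₁ ∧ 0 < C₂ ∧
          ∀ t : ℝ, 0 ≤ t → C₁ * v t ≤ w t ∧ w t ≤ C₂ * v t := by
  have hwpos := hw.1
  have hwcont := hw.2.2.1
  constructor
  · rintro ⟨C, hC, hwC⟩
    refine ⟨monomialEnvelope u, isWeight_monomialEnvelope hw hu (by linarith) hwC,
      logTropical_monomialEnvelope hwpos hu, 1, C, one_pos, by linarith, fun t ht => ?_⟩
    exact ⟨by simpa using monomialEnvelope_le hwpos hu ht, hwC t ht⟩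
  · rintro ⟨v, hv, hvtrop, C₁, C₂, hC₁, hC₂, hwv⟩
    have hC : 0 < C₂ / C₁ := div_pos hC₂ hC₁
    refine ⟨C₂ / C₁ + 1, by linarith, fun t ht => le_on_Ici_of_le_on_Ioi hwcont
      (continuousOn_const.mul (continuousOn_monomialEnvelope hwpos hu)) (fun s hs => ?_) ht⟩
    have hvP := mul_le_monomialEnvelope_of_logTropical hwpos hwcont hu hvtrop
      (fun s hs => hv.1 s hs.le) hC₁ (fun s hs => (hwv s hs).1) hs
    calc w s ≤ C₂ * v s := (hwv s hs.le).2
      _ = C₂ / C₁ * (C₁ * v s) := by field_simp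
      _ ≤ C₂ / C₁ * monomialEnvelope u s := by gcongr
      _ ≤ (C₂ / C₁ + 1) * monomialEnvelope u s := by
        gcongr
        · exact (monomialEnvelope_pos hwpos hu hs.le).le
        · linarith

/-- A weight `w` satisfies `w(t) ≤ C·P_w(t)` for some `C > 1` and all
`t ≥ 0` (approximability from below by monomials) if and only if `w` is equivalent to a
log-tropical weight function. Here `u_k = sup_{t ≥ 0} t^k / w(t)` and
`P_w(t) = sup_k t^k / u_k`. -/
theorem approximable_by_monomials_iff_logTropical (w : ℝ → ℝ) (hw : IsWeight w)
    (u : ℕ → ℝ)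
    (hu : ∀ k : ℕ, IsLUB {y : ℝ | ∃ t : ℝ, 0 ≤ t ∧ y = t ^ k / w t} (u k))
    (hupos : ∀ k : ℕ, 0 < u k) :
    (∃ C : ℝ, 1 < C ∧ ∀ t : ℝ, 0 ≤ t → w t ≤ C * ⨆ k : ℕ, t ^ k / u k) ↔
      ∃ v : ℝ → ℝ, IsWeight v ∧ LogTropical v ∧
        ∃ C₁ C₂ : ℝ, 0 < C₁ ∧ 0 < C₂ ∧
          ∀ t : ℝ, 0 ≤ t → C₁ * v t ≤ w t ∧ w t ≤ C₂ * v t :=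
  approximable_by_monomials_iff_logTropical_general w hw u hu
end

section
/- Let w : [0,∞) → (0,∞) be a rapid weight function that is log-convex and C²-smooth, with Φ(x) = log w(e^x). If liminf_{x→+∞} Φ''(x) > 0, then w is equivalent to a log-tropical weight function. -/
/-!
Write `Φ = log ∘ w ∘ exp` and `φ = Φ'`. The largest log-tropical minorant of `Φ` is
`T(x) = sup_j (b_j + j x)` with `b_j = inf_y (Φ(y) - j y)`. If `φ(c) = j`, the tangent line of
the convex `Φ` at `c` lies below `Φ`, so `b_j = Φ(c) - j c`, and the tangent line at `x` then
gives `Φ(x) - T(x) ≤ (φ(x) - j)(x - c)`. For large `x` take `j = ⌊φ(x)⌋` and `c ≤ x` with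
`φ(c) = j` (intermediate value theorem): the first factor is below `1`, and `φ' ≥ α` forces
`x - c ≤ 1/α`. Monotonicity of `Φ` bounds `Φ - T` on the remaining half-line, so `w` is
equivalent to `v = exp ∘ T ∘ log`.
-/

open Filter Topology Set

lemma ConvexOn.add_deriv_mul_sub_le {f : ℝ → ℝ} (hf : ConvexOn ℝ univ f) {x : ℝ}
    (hx : DifferentiableAt ℝ f x) (y : ℝ) : f x + deriv f x * (y - x) ≤ f y := by
  rcases lt_trichotomy x y with hxy | rfl | hyx
  · have h := hf.deriv_le_slope (mem_univ x) (mem_univ y) hxy hx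
    rw [slope_def_field, le_div_iff₀ (sub_pos.2 hxy)] at h
    linarith
  · simp
  · have h := hf.slope_le_deriv (mem_univ y) (mem_univ x) hyx hx
    rw [slope_def_field, div_le_iff₀ (sub_pos.2 hyx)] at h
    linarith

lemma mul_sub_le_deriv_sub_deriv {f : ℝ → ℝ} (hf : ContDiff ℝ 2 f) {α A : ℝ}
    (h : ∀ x, A ≤ x → α ≤ iteratedDeriv 2 f x) :
    ∀ᵉ (x ∈ Ici A) (y ∈ Ici A), x ≤ y → α * (y - x) ≤ deriv f y - deriv f x := by
  have hdiff : Differentiable ℝ (deriv f) := by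
    simpa only [iteratedDeriv_one] using hf.differentiable_iteratedDeriv 1 (by norm_num)
  refine (convex_Ici A).mul_sub_le_image_sub_of_le_deriv hdiff.continuous.continuousOn
    hdiff.differentiableOn fun x hx => ?_
  simpa only [iteratedDeriv_succ, iteratedDeriv_zero] using h x (interior_subset hx)

lemma tendsto_atTop_of_mul_sub_le {f : ℝ → ℝ} {α A : ℝ} (hα : 0 < α)
    (h : ∀ y, A ≤ y → α * (y - A) ≤ f y - f A) : Tendsto f atTop atTop := by
  refine tendsto_atTop_mono' atTop ((eventually_ge_atTop A).mono fun y hy => ?_)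
    (tendsto_atTop_add_const_left _ (f A)
      ((tendsto_atTop_add_const_right _ (-A) tendsto_id).const_mul_atTop hα))
  dsimp only [id]
  linarith [h y hy]

section TropicalMinorant

variable {Φ : ℝ → ℝ}

noncomputable def tropicalCoeff (Φ : ℝ → ℝ) (j : ℕ) : ℝ := ⨅ y, Φ y - j * y

noncomputable def tropicalMinorant (Φ : ℝ → ℝ) (x : ℝ) : ℝ :=
  ⨆ j : ℕ, tropicalCoeff Φ j + j * x

lemma tropicalCoeff_add_mul_le {j : ℕ} (hj : BddBelow (range fun y => Φ y - j * y)) (x : ℝ) :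
    tropicalCoeff Φ j + j * x ≤ Φ x := by
  have h : tropicalCoeff Φ j ≤ Φ x - j * x := ciInf_le hj x
  linarith

lemma bddAbove_tropicalTerms (hΦ : ∀ j : ℕ, BddBelow (range fun y => Φ y - j * y)) (x : ℝ) :
    BddAbove (range fun j : ℕ => tropicalCoeff Φ j + j * x) :=
  ⟨Φ x, forall_mem_range.2 fun j => tropicalCoeff_add_mul_le (hΦ j) x⟩

lemma le_tropicalMinorant (hΦ : ∀ j : ℕ, BddBelow (range fun y => Φ y - j * y)) (j : ℕ)
    (x : ℝ) : tropicalCoeff Φ j + j * x ≤ tropicalMinorant Φ x :=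
  le_ciSup (bddAbove_tropicalTerms hΦ x) j

lemma tropicalMinorant_le (hΦ : ∀ j : ℕ, BddBelow (range fun y => Φ y - j * y)) (x : ℝ) :
    tropicalMinorant Φ x ≤ Φ x :=
  ciSup_le fun j => tropicalCoeff_add_mul_le (hΦ j) x

lemma monotone_tropicalMinorant (hΦ : ∀ j : ℕ, BddBelow (range fun y => Φ y - j * y)) :
    Monotone (tropicalMinorant Φ) := fun x y hxy =>
  ciSup_le fun j => le_trans (by gcongr) (le_tropicalMinorant hΦ j y)

lemma convexOn_tropicalMinorant (hΦ : ∀ j : ℕ, BddBelow (range fun y => Φ y - j * y)) :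
    ConvexOn ℝ univ (tropicalMinorant Φ) := by
  refine ⟨convex_univ, fun x _ y _ a c ha hc hac => ciSup_le fun j => ?_⟩
  calc tropicalCoeff Φ j + j * (a • x + c • y)
      = a * (tropicalCoeff Φ j + j * x) + c * (tropicalCoeff Φ j + j * y) := by
        simp only [smul_eq_mul]; linear_combination tropicalCoeff Φ j * hac.symm
    _ ≤ a • tropicalMinorant Φ x + c • tropicalMinorant Φ y := by
        simp only [smul_eq_mul]; gcongr <;> exact le_tropicalMinorant hΦ j _

lemma continuous_tropicalMinorant (hΦ : ∀ j : ℕ, BddBelow (range fun y => Φ y - j * y)) :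
    Continuous (tropicalMinorant Φ) :=
  continuousOn_univ.1 ((convexOn_tropicalMinorant hΦ).continuousOn isOpen_univ)

lemma tendsto_tropicalMinorant_atTop (hΦ : ∀ j : ℕ, BddBelow (range fun y => Φ y - j * y)) :
    Tendsto (tropicalMinorant Φ) atTop atTop :=
  tendsto_atTop_mono (fun x => by simpa using le_tropicalMinorant hΦ 1 x)
    (tendsto_atTop_add_const_left _ _ tendsto_id)

lemma tropicalCoeff_zero_eq {L : ℝ} (hmono : Monotone Φ) (hL : Tendsto Φ atBot (𝓝 L)) :
    tropicalCoeff Φ 0 = L := by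
  simp only [tropicalCoeff, Nat.cast_zero, zero_mul, sub_zero]
  exact tendsto_nhds_unique
    (tendsto_atBot_ciInf hmono ⟨L, forall_mem_range.2 (hmono.le_of_tendsto hL)⟩) hL

lemma tendsto_tropicalMinorant_atBot (hΦ : ∀ j : ℕ, BddBelow (range fun y => Φ y - j * y))
    {L : ℝ} (hmono : Monotone Φ) (hL : Tendsto Φ atBot (𝓝 L)) :
    Tendsto (tropicalMinorant Φ) atBot (𝓝 L) :=
  tendsto_of_tendsto_of_tendsto_of_le_of_le tendsto_const_nhds hL
    (fun x => by simpa [tropicalCoeff_zero_eq hmono hL] using le_tropicalMinorant hΦ 0 x)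
    (tropicalMinorant_le hΦ)

lemma exists_le_tropicalMinorant_add (hΦ : ∀ j : ℕ, BddBelow (range fun y => Φ y - j * y))
    (hmono : Monotone Φ) {x₀ D : ℝ} (hD : ∀ x, x₀ ≤ x → Φ x - tropicalMinorant Φ x ≤ D) :
    ∃ C, ∀ x, Φ x ≤ tropicalMinorant Φ x + C := by
  refine ⟨max D (Φ x₀ - tropicalCoeff Φ 0), fun x => ?_⟩
  rcases le_total x₀ x with hx | hx
  · linarith [hD x hx, le_max_left D (Φ x₀ - tropicalCoeff Φ 0)]
  · have h0 := le_tropicalMinorant hΦ 0 x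
    simp only [Nat.cast_zero, zero_mul, add_zero] at h0
    linarith [hmono hx, le_max_right D (Φ x₀ - tropicalCoeff Φ 0)]

lemma isLeast_sub_mul_of_deriv_eq (hconv : ConvexOn ℝ univ Φ) {c : ℝ}
    (hc : DifferentiableAt ℝ Φ c) {j : ℕ} (hj : deriv Φ c = j) :
    IsLeast (range fun y => Φ y - j * y) (Φ c - j * c) :=
  ⟨mem_range_self c, forall_mem_range.2 fun y => by
    linarith [hj ▸ hconv.add_deriv_mul_sub_le hc y]⟩

lemma bddBelow_sub_mul (hconv : ConvexOn ℝ univ Φ) (hdiff : Differentiable ℝ Φ) {L : ℝ}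
    (hL : ∀ y, L ≤ Φ y) (hφ : Tendsto (deriv Φ) atTop atTop) (j : ℕ) :
    BddBelow (range fun y => Φ y - j * y) := by
  obtain ⟨c, hc⟩ := (hφ.eventually_ge_atTop (j : ℝ)).exists
  refine ⟨min (Φ c - j * c) (L - j * c), forall_mem_range.2 fun y => ?_⟩
  rcases le_total c y with hcy | hyc
  · have htan := hconv.add_deriv_mul_sub_le (hdiff c) y
    have hslope : j * (y - c) ≤ deriv Φ c * (y - c) := by gcongr
    exact (min_le_left _ _).trans (by linarith)
  · have hjy : j * y ≤ j * c := by gcongr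
    exact (min_le_right _ _).trans (by linarith [hL y])

lemma sub_tropicalMinorant_le_of_deriv_eq (hconv : ConvexOn ℝ univ Φ)
    (hΦ : ∀ j : ℕ, BddBelow (range fun y => Φ y - j * y)) {c x : ℝ}
    (hc : DifferentiableAt ℝ Φ c) (hx : DifferentiableAt ℝ Φ x) {j : ℕ} (hj : deriv Φ c = j) :
    Φ x - tropicalMinorant Φ x ≤ (deriv Φ x - j) * (x - c) := by
  have hb : tropicalCoeff Φ j = Φ c - j * c :=
    (isLeast_sub_mul_of_deriv_eq hconv hc hj).csInf_eq
  have hT := le_tropicalMinorant hΦ j x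
  rw [hb] at hT
  linarith [hconv.add_deriv_mul_sub_le hx c]

lemma sub_tropicalMinorant_le_inv (hconv : ConvexOn ℝ univ Φ) (hdiff : Differentiable ℝ Φ)
    (hφ : Continuous (deriv Φ)) (hΦ : ∀ j : ℕ, BddBelow (range fun y => Φ y - j * y))
    {α A : ℝ} (hα : 0 < α) (hA : 0 ≤ deriv Φ A)
    (hgrow : ∀ᵉ (x ∈ Ici A) (y ∈ Ici A), x ≤ y → α * (y - x) ≤ deriv Φ y - deriv Φ x)
    (x : ℝ) (hx : A + α⁻¹ ≤ x) : Φ x - tropicalMinorant Φ x ≤ α⁻¹ := by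
  have hAx : A ≤ x := by linarith [inv_pos.2 hα]
  have hφx : deriv Φ A + 1 ≤ deriv Φ x := by
    have : 1 ≤ α * (x - A) := by
      rw [← mul_inv_cancel₀ hα.ne']; gcongr; linarith
    linarith [hgrow A self_mem_Ici x hAx hAx]
  set j := ⌊deriv Φ x⌋₊
  have hj : (j : ℝ) ≤ deriv Φ x := Nat.floor_le (by linarith)
  have hj' : deriv Φ x < j + 1 := Nat.lt_floor_add_one _
  obtain ⟨c, ⟨hAc, hcx⟩, hc⟩ : (j : ℝ) ∈ deriv Φ '' Icc A x :=
    intermediate_value_Icc hAx hφ.continuousOn ⟨by linarith, hj⟩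
  have hαc : α * (x - c) ≤ 1 := by linarith [hgrow c hAc x (hAc.trans hcx) hcx]
  calc Φ x - tropicalMinorant Φ x ≤ (deriv Φ x - j) * (x - c) :=
        sub_tropicalMinorant_le_of_deriv_eq hconv hΦ (hdiff c) (hdiff x) hc
    _ ≤ 1 * (x - c) := by gcongr; linarith
    _ ≤ α⁻¹ := by rw [one_mul, ← mul_one α⁻¹, le_inv_mul_iff₀ hα]; exact hαc

end TropicalMinorant

noncomputable def logTransform (w : ℝ → ℝ) (x : ℝ) : ℝ := Real.log (w (Real.exp x))

lemma IsWeight.monotone_logTransform {w : ℝ → ℝ} (hw : IsWeight w) :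
    Monotone (logTransform w) := fun _ _ hxy =>
  Real.log_le_log (hw.1 _ (Real.exp_pos _).le)
    (hw.2.1 (Real.exp_pos _).le (Real.exp_pos _).le (Real.exp_le_exp.2 hxy))

lemma IsWeight.tendsto_logTransform_atBot {w : ℝ → ℝ} (hw : IsWeight w) :
    Tendsto (logTransform w) atBot (𝓝 (Real.log (w 0))) := by
  have hexp : Tendsto Real.exp atBot (𝓝[Ici 0] 0) :=
    tendsto_nhdsWithin_of_tendsto_nhds_of_eventually_within _ Real.tendsto_exp_atBot
      (Eventually.of_forall fun x => (Real.exp_pos x).le)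
  exact ((Real.continuousAt_log (hw.1 0 le_rfl).ne').tendsto).comp
    ((hw.2.2.1 0 self_mem_Ici).tendsto.comp hexp)

/-- `e^{T(log t)}` for `t ≠ 0`; since `Real.log 0 = 0`, the value at `0` is given separately. -/
noncomputable def expCompLog (T : ℝ → ℝ) (L : ℝ) (t : ℝ) : ℝ :=
  if t = 0 then Real.exp L else Real.exp (T (Real.log t))

section ExpCompLog

variable {T : ℝ → ℝ} {L : ℝ}

lemma expCompLog_zero : expCompLog T L 0 = Real.exp L := if_pos rfl

lemma expCompLog_of_pos {t : ℝ} (ht : 0 < t) :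
    expCompLog T L t = Real.exp (T (Real.log t)) :=
  if_neg ht.ne'

lemma isWeight_expCompLog (hmono : Monotone T) (hcont : Continuous T)
    (hbot : Tendsto T atBot (𝓝 L)) (htop : Tendsto T atTop atTop) :
    IsWeight (expCompLog T L) := by
  have hpos : ∀ {t}, 0 < t → expCompLog T L t = Real.exp (T (Real.log t)) := expCompLog_of_pos
  have hlim : Tendsto (expCompLog T L) (𝓝[>] 0) (𝓝 (Real.exp L)) :=
    ((Real.continuous_exp.tendsto L).comp (hbot.comp Real.tendsto_log_nhdsGT_zero)).congr'
      (eventually_nhdsWithin_of_forall fun t ht => (hpos ht).symm)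
  refine ⟨fun t _ => ?_, fun s hs t ht hst => ?_, fun t ht => ?_, fun M => ?_⟩
  · unfold expCompLog; split_ifs <;> exact Real.exp_pos _
  · rcases (mem_Ici.1 hs).eq_or_lt with rfl | hs
    · rcases (mem_Ici.1 ht).eq_or_lt with rfl | ht
      · rfl
      · rw [expCompLog_zero, hpos ht]
        exact Real.exp_le_exp.2 (hmono.le_of_tendsto hbot _)
    · rw [hpos hs, hpos (hs.trans_le hst)]
      exact Real.exp_le_exp.2 (hmono (Real.log_le_log hs hst))
  · rcases (mem_Ici.1 ht).eq_or_lt with rfl | ht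
    · rw [← Ioi_insert, continuousWithinAt_insert_self, ContinuousWithinAt, expCompLog_zero]
      exact hlim
    · exact (Real.continuous_exp.continuousAt.comp (hcont.continuousAt.comp
        (Real.continuousAt_log ht.ne'))).congr_of_eventuallyEq
        ((lt_mem_nhds ht).mono fun s hs => hpos hs) |>.continuousWithinAt
  · have htend : Tendsto (expCompLog T L) atTop atTop :=
      (Real.tendsto_exp_atTop.comp (htop.comp Real.tendsto_log_atTop)).congr'
        ((eventually_gt_atTop 0).mono fun t ht => (hpos ht).symm)
    exact ((eventually_ge_atTop 0).and (htend.eventually_gt_atTop M)).exists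

lemma logTropical_expCompLog_tropicalMinorant {Φ : ℝ → ℝ}
    (hΦ : ∀ j : ℕ, BddBelow (range fun y => Φ y - j * y)) :
    LogTropical (expCompLog (tropicalMinorant Φ) L) := by
  refine ⟨univ, tropicalCoeff Φ, univ_nonempty, fun x => ?_, fun x => ?_⟩
  · simpa only [image_univ] using bddAbove_tropicalTerms hΦ x
  · rw [expCompLog_of_pos (Real.exp_pos x), Real.log_exp, Real.log_exp, image_univ]
    rfl

lemma expCompLog_le_and_le_exp_mul {w : ℝ → ℝ} (hw : ∀ t, 0 ≤ t → 0 < w t) {C : ℝ}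
    (hlow : ∀ x, T x ≤ logTransform w x) (hup : ∀ x, logTransform w x ≤ T x + C)
    (t : ℝ) (ht : 0 ≤ t) :
    expCompLog T (Real.log (w 0)) t ≤ w t ∧
      w t ≤ Real.exp C * expCompLog T (Real.log (w 0)) t := by
  rcases ht.eq_or_lt with rfl | ht
  · have hC : 0 ≤ C := by linarith [hlow 0, hup 0]
    rw [expCompLog_zero, Real.exp_log (hw 0 le_rfl)]
    exact ⟨le_rfl, le_mul_of_one_le_left (hw 0 le_rfl).le (Real.one_le_exp hC)⟩
  · have hwt : w t = Real.exp (logTransform w (Real.log t)) := by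
      rw [logTransform, Real.exp_log ht, Real.exp_log (hw t ht.le)]
    rw [expCompLog_of_pos ht, hwt, ← Real.exp_add]
    exact ⟨Real.exp_le_exp.2 (hlow _), Real.exp_le_exp.2 (by linarith [hup (Real.log t)])⟩

end ExpCompLog

theorem liminf_pos_implies_logTropical_general (w : ℝ → ℝ) (hw : IsWeight w)
    (hconv : ConvexOn ℝ Set.univ (fun x : ℝ => Real.log (w (Real.exp x))))
    (hC2 : ContDiff ℝ 2 (fun x : ℝ => Real.log (w (Real.exp x))))
    (hliminf : ∃ α : ℝ, 0 < α ∧ ∃ A : ℝ, ∀ x : ℝ, A ≤ x →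
      α ≤ iteratedDeriv 2 (fun x : ℝ => Real.log (w (Real.exp x))) x) :
    ∃ v : ℝ → ℝ, IsWeight v ∧ LogTropical v ∧
      ∃ C₁ C₂ : ℝ, 0 < C₁ ∧ 0 < C₂ ∧
        ∀ t : ℝ, 0 ≤ t → C₁ * v t ≤ w t ∧ w t ≤ C₂ * v t := by
  obtain ⟨α, hα, A, hA⟩ := hliminf
  change ConvexOn ℝ univ (logTransform w) at hconv
  change ContDiff ℝ 2 (logTransform w) at hC2
  change ∀ x, A ≤ x → α ≤ iteratedDeriv 2 (logTransform w) x at hA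
  have hmono := hw.monotone_logTransform
  have hbot := hw.tendsto_logTransform_atBot
  have hdiff : Differentiable ℝ (logTransform w) := hC2.differentiable (by norm_num)
  have hgrow := mul_sub_le_deriv_sub_deriv hC2 hA
  have hφtop := tendsto_atTop_of_mul_sub_le hα fun y hy => hgrow A self_mem_Ici y hy hy
  have hΦ := bddBelow_sub_mul hconv hdiff (hmono.le_of_tendsto hbot) hφtop
  obtain ⟨C, hC⟩ := exists_le_tropicalMinorant_add hΦ hmono
    (sub_tropicalMinorant_le_inv hconv hdiff (hC2.continuous_deriv (by norm_num)) hΦ hα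
      hmono.deriv_nonneg hgrow)
  refine ⟨expCompLog (tropicalMinorant (logTransform w)) (Real.log (w 0)),
    isWeight_expCompLog (monotone_tropicalMinorant hΦ) (continuous_tropicalMinorant hΦ)
      (tendsto_tropicalMinorant_atBot hΦ hmono hbot) (tendsto_tropicalMinorant_atTop hΦ),
    logTropical_expCompLog_tropicalMinorant hΦ, 1, Real.exp C, one_pos, Real.exp_pos C,
    fun t ht => ?_⟩
  rw [one_mul]
  exact expCompLog_le_and_le_exp_mul hw.1 (tropicalMinorant_le hΦ) hC t ht

/-- Let `w` be a rapid weight, log-convex and C²-smooth in the sense that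
`Φ(x) = log w(e^x)` is convex and C² on `ℝ`. If `liminf_{x→+∞} Φ''(x) > 0` (i.e. `Φ''`
is eventually bounded below by some `α > 0`), then `w` is equivalent to a log-tropical
weight function. -/
theorem liminf_pos_implies_logTropical (w : ℝ → ℝ) (hw : IsWeight w)
    (hrapid : ∀ k : ℕ, Filter.Tendsto (fun t : ℝ => w t / t ^ k)
      Filter.atTop Filter.atTop)
    (hconv : ConvexOn ℝ Set.univ (fun x : ℝ => Real.log (w (Real.exp x))))
    (hC2 : ContDiff ℝ 2 (fun x : ℝ => Real.log (w (Real.exp x))))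
    (hliminf : ∃ α : ℝ, 0 < α ∧ ∃ A : ℝ, ∀ x : ℝ, A ≤ x →
      α ≤ iteratedDeriv 2 (fun x : ℝ => Real.log (w (Real.exp x))) x) :
    ∃ v : ℝ → ℝ, IsWeight v ∧ LogTropical v ∧
      ∃ C₁ C₂ : ℝ, 0 < C₁ ∧ 0 < C₂ ∧
        ∀ t : ℝ, 0 ≤ t → C₁ * v t ≤ w t ∧ w t ≤ C₂ * v t :=
  liminf_pos_implies_logTropical_general w hw hconv hC2 hliminf
end

section
/- Let w : [0,∞) → (0,∞) be a rapid weight function that is log-convex and C²-smooth, with Φ(x) = log w(e^x). If limsup_{x→+∞} Φ''(x) = 0, then w is NOT equivalent to any log-tropical weight function. -/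
open Filter Real Set

noncomputable def tropicalSup (E : Set ℕ) (b : ℕ → ℝ) (x : ℝ) : ℝ :=
  sSup ((fun j : ℕ => b j + j * x) '' E)

theorem tropicalSup_slope_gap {E : Set ℕ} {b : ℕ → ℝ} (hE : E.Nonempty)
    (hbdd : ∀ x : ℝ, BddAbove ((fun j : ℕ => b j + j * x) '' E))
    (n : ℕ) (x : ℝ) {L : ℝ} (hL : 0 ≤ L) :
    tropicalSup E b x - tropicalSup E b (x - L) ≤ n * L + 1 ∨
      (n + 1) * L - 1 ≤ tropicalSup E b (x + L) - tropicalSup E b x := by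
  obtain ⟨_, ⟨j, hj, rfl⟩, hjx⟩ := exists_lt_of_lt_csSup (hE.image _)
    (sub_one_lt (tropicalSup E b x))
  have hle : ∀ y, b j + j * y ≤ tropicalSup E b y := fun y => le_csSup (hbdd y) ⟨j, hj, rfl⟩
  rcases le_or_gt j n with hjn | hnj
  · left
    have : (j : ℝ) * L ≤ n * L := mul_le_mul_of_nonneg_right (by exact_mod_cast hjn) hL
    linarith [hle (x - L)]
  · right
    have : ((n : ℝ) + 1) * L ≤ j * L := mul_le_mul_of_nonneg_right (by exact_mod_cast hnj) hL
    linarith [hle (x + L)]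

theorem eventually_mul_le_log_comp_exp {w : ℝ → ℝ}
    (hrapid : ∀ k : ℕ, Tendsto (fun t : ℝ => w t / t ^ k) atTop atTop) (k : ℕ) :
    ∀ᶠ x in atTop, k * x ≤ log (w (exp x)) := by
  filter_upwards [tendsto_exp_atTop.eventually ((hrapid k).eventually_ge_atTop 1)] with x hx
  have hpow : exp x ^ k ≤ w (exp x) := (one_le_div (by positivity)).mp hx
  simpa only [log_pow, log_exp] using log_le_log (by positivity) hpow

theorem exists_lt_le_deriv_of_superlinear {f : ℝ → ℝ} (hf : Differentiable ℝ f)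
    (hsuper : ∀ k : ℕ, ∀ᶠ x in atTop, k * x ≤ f x) (p M : ℝ) :
    ∃ x, p < x ∧ M ≤ deriv f x := by
  obtain ⟨k, hk⟩ := exists_nat_ge (M + 1)
  obtain ⟨x, hfx, hpx, hx0, hxp⟩ := ((hsuper k).and ((eventually_gt_atTop p).and
    ((eventually_ge_atTop 0).and (eventually_ge_atTop (f p - M * p))))).exists
  obtain ⟨c, hc, hslope⟩ := exists_deriv_eq_slope f hpx hf.continuous.continuousOn
    hf.differentiableOn
  refine ⟨c, hc.1, ?_⟩
  rw [hslope, le_div_iff₀ (sub_pos.mpr hpx)]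
  have : (M + 1) * x ≤ k * x := mul_le_mul_of_nonneg_right hk hx0
  linarith

theorem exists_ge_eq_nat_add_half {g : ℝ → ℝ} (hg : Continuous g)
    (hunb : ∀ p M : ℝ, ∃ x, p < x ∧ M ≤ g x) (p : ℝ) :
    ∃ x, p ≤ x ∧ ∃ n : ℕ, g x = n + 1 / 2 := by
  obtain ⟨n, hn⟩ := exists_nat_ge (g p)
  obtain ⟨x, hpx, hx⟩ := hunb p (n + 1)
  obtain ⟨y, hy, hgy⟩ := intermediate_value_Icc hpx.le hg.continuousOn
    (show (n : ℝ) + 1 / 2 ∈ Icc (g p) (g x) from ⟨by linarith, by linarith⟩)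
  exact ⟨y, hy.1, n, hgy⟩

theorem sub_le_and_le_sub_of_deriv_deriv_le {f : ℝ → ℝ} {A ε x L : ℝ}
    (hf : Differentiable ℝ f) (hf' : Differentiable ℝ (deriv f))
    (h : ∀ y, A ≤ y → deriv (deriv f) y ≤ ε) (hε : 0 ≤ ε) (hx : A ≤ x - L) (hL : 0 ≤ L) :
    f (x + L) - f x ≤ (deriv f x + ε * L) * L ∧
      (deriv f x - ε * L) * L ≤ f x - f (x - L) := by
  have hlip : ∀ y z, A ≤ y → y ≤ z → deriv f z - deriv f y ≤ ε * (z - y) :=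
    fun y z hy hyz => (convex_Ici A).image_sub_le_mul_sub_of_deriv_le
      hf'.continuous.continuousOn hf'.differentiableOn
      (fun u hu => h u (interior_subset hu)) y hy z (hy.trans hyz) hyz
  constructor
  · have hbound : ∀ y ∈ interior (Icc x (x + L)), deriv f y ≤ deriv f x + ε * L := by
      rw [interior_Icc]
      intro y hy
      linarith [hlip x y (by linarith) hy.1.le, mul_le_mul_of_nonneg_left hy.2.le hε]
    simpa using (convex_Icc x (x + L)).image_sub_le_mul_sub_of_deriv_le
      hf.continuous.continuousOn hf.differentiableOn hbound x ⟨le_rfl, by linarith⟩ (x + L)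
      ⟨by linarith, le_rfl⟩ (by linarith)
  · have hbound : ∀ y ∈ interior (Icc (x - L) x), deriv f x - ε * L ≤ deriv f y := by
      rw [interior_Icc]
      intro y hy
      linarith [hlip y x (by linarith [hy.1]) hy.2.le, mul_le_mul_of_nonneg_left hy.1.le hε]
    simpa using (convex_Icc (x - L) x).mul_sub_le_image_sub_of_le_deriv
      hf.continuous.continuousOn hf.differentiableOn hbound (x - L) ⟨le_rfl, by linarith⟩ x
      ⟨by linarith, le_rfl⟩ (by linarith)

theorem not_forall_sub_tropicalSup_mem_Icc {Φ : ℝ → ℝ} (hC2 : ContDiff ℝ 2 Φ)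
    (hsuper : ∀ k : ℕ, ∀ᶠ x in atTop, k * x ≤ Φ x)
    (hflat : ∀ ε : ℝ, 0 < ε → ∃ A : ℝ, ∀ x : ℝ, A ≤ x → iteratedDeriv 2 Φ x < ε)
    {E : Set ℕ} {b : ℕ → ℝ} (hE : E.Nonempty)
    (hbdd : ∀ x : ℝ, BddAbove ((fun j : ℕ => b j + j * x) '' E)) (c₁ c₂ : ℝ) :
    ¬ ∀ x, Φ x - tropicalSup E b x ∈ Icc c₁ c₂ := by
  intro hc
  have hD : 0 ≤ c₂ - c₁ := by linarith [(hc 0).1, (hc 0).2]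
  obtain ⟨hΦ, -, hΦ'⟩ := contDiff_succ_iff_deriv.mp (show ContDiff ℝ (1 + 1) Φ from hC2)
  have hΦ'' := (contDiff_one_iff_deriv.mp hΦ').1
  -- the window length `L` is chosen so that a gap of `L / 4` beats the oscillation `c₂ - c₁`
  set L := 4 * (c₂ - c₁) + 8
  have hL : 0 < L := by positivity
  obtain ⟨A, hA⟩ := hflat (1 / (4 * L)) (by positivity)
  have hεL : 1 / (4 * L) * L = 1 / 4 := by field_simp
  have hflat' : ∀ y, A ≤ y → deriv (deriv Φ) y ≤ 1 / (4 * L) := fun y hy => by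
    simpa [iteratedDeriv_succ, iteratedDeriv_one] using (hA y hy).le
  obtain ⟨x, hx, n, hn⟩ := exists_ge_eq_nat_add_half hΦ'.continuous
    (exists_lt_le_deriv_of_superlinear hΦ hsuper) (A + L)
  obtain ⟨hright, hleft⟩ := sub_le_and_le_sub_of_deriv_deriv_le hΦ hΦ'' hflat' (by positivity)
    (show A ≤ x - L by linarith) hL.le
  rw [hn, add_mul _ _ L, hεL] at hright
  rw [hn, sub_mul _ _ L, hεL] at hleft
  rcases tropicalSup_slope_gap hE hbdd n x hL.le with hgap | hgap
  · linarith [(hc x).2, (hc (x - L)).1]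
  · linarith [(hc x).2, (hc (x + L)).1]

theorem limsup_zero_implies_not_logTropical_general (w : ℝ → ℝ)
    (hrapid : ∀ k : ℕ, Filter.Tendsto (fun t : ℝ => w t / t ^ k)
      Filter.atTop Filter.atTop)
    (hC2 : ContDiff ℝ 2 (fun x : ℝ => Real.log (w (Real.exp x))))
    (hlimsup : ∀ ε : ℝ, 0 < ε → ∃ A : ℝ, ∀ x : ℝ, A ≤ x →
      iteratedDeriv 2 (fun x : ℝ => Real.log (w (Real.exp x))) x < ε) :
    ¬ ∃ v : ℝ → ℝ, IsWeight v ∧ LogTropical v ∧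
        ∃ C₁ C₂ : ℝ, 0 < C₁ ∧ 0 < C₂ ∧
          ∀ t : ℝ, 0 ≤ t → C₁ * v t ≤ w t ∧ w t ≤ C₂ * v t := by
  rintro ⟨v, hv, ⟨E, b, hE, hbdd, hlog⟩, C₁, C₂, hC₁, hC₂, hcomp⟩
  refine not_forall_sub_tropicalSup_mem_Icc hC2 (eventually_mul_le_log_comp_exp hrapid) hlimsup
    hE hbdd (log C₁) (log C₂) fun x => ?_
  have hv₀ : 0 < v (exp x) := hv.1 _ (exp_pos x).le
  obtain ⟨hlo, hhi⟩ := hcomp (exp x) (exp_pos x).le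
  rw [tropicalSup, ← hlog x, mem_Icc, sub_le_iff_le_add, le_sub_iff_add_le,
    ← log_mul hC₁.ne' hv₀.ne', ← log_mul hC₂.ne' hv₀.ne']
  exact ⟨log_le_log (by positivity) hlo, log_le_log ((mul_pos hC₁ hv₀).trans_le hlo) hhi⟩

/-- Let `w` be a rapid weight, log-convex and C²-smooth in the sense that
`Φ(x) = log w(e^x)` is convex and C² on `ℝ`. If `limsup_{x→+∞} Φ''(x) = 0` (i.e. `Φ''`
is eventually smaller than every `ε > 0`), then `w` is NOT equivalent to any
log-tropical weight function. -/
theorem limsup_zero_implies_not_logTropical (w : ℝ → ℝ) (hw : IsWeight w)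
    (hrapid : ∀ k : ℕ, Filter.Tendsto (fun t : ℝ => w t / t ^ k)
      Filter.atTop Filter.atTop)
    (hconv : ConvexOn ℝ Set.univ (fun x : ℝ => Real.log (w (Real.exp x))))
    (hC2 : ContDiff ℝ 2 (fun x : ℝ => Real.log (w (Real.exp x))))
    (hlimsup : ∀ ε : ℝ, 0 < ε → ∃ A : ℝ, ∀ x : ℝ, A ≤ x →
      iteratedDeriv 2 (fun x : ℝ => Real.log (w (Real.exp x))) x < ε) :
    ¬ ∃ v : ℝ → ℝ, IsWeight v ∧ LogTropical v ∧
        ∃ C₁ C₂ : ℝ, 0 < C₁ ∧ 0 < C₂ ∧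
          ∀ t : ℝ, 0 ≤ t → C₁ * v t ≤ w t ∧ w t ≤ C₂ * v t :=
  limsup_zero_implies_not_logTropical_general w hrapid hC2 hlimsup
end

section
/- Let w_α(t) = exp((log t)^α) for t > e (extended to a weight function on [0,∞)) with α > 1. If α ≥ 2 then w_α is equivalent to a log-tropical weight function, while if 1 < α < 2 then w_α is not equivalent to any log-tropical weight function. -/
/-!
On the logarithmic scale `x = log t` the weight is `x ^ α`, and a log-tropical weight is a
supremum of lines with integer slopes. The tangent to `x ^ α` of slope `j` touches it at
`(j / α) ^ (α - 1)⁻¹`, and the supremum of these tangents lies below `x ^ α`. For `α ≥ 2`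
consecutive tangent points are at most `1` apart, so this supremum stays within `1` of `x ^ α`.

For `α < 2` the slope `α x ^ (α - 1)` varies by less than `1/4` over a window
`[x₀ - H, x₀ + H]` far enough out, and we centre the window at a point of slope `j + 1/2`.
A line of integer slope `m` then has slope off by at least `1/4` from that of `x ^ α` on one half
of the window, so by convexity `x ^ α` minus the line grows by at least `H/4` from one end of the
window to `x₀`. Taking a line nearly attaining the supremum at `x₀` shows that the supremum cannot
stay within a bounded distance of `x ^ α`.
-/

open Real Set Filter

theorem rpow_tangent_le {p x y : ℝ} (hp : 1 ≤ p) (hy : 0 < y) (hx : 0 ≤ x) :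
    y ^ p + p * y ^ (p - 1) * (x - y) ≤ x ^ p := by
  have h := one_add_mul_self_le_rpow_one_add (s := x / y - 1)
    (by linarith [div_nonneg hx hy.le]) hp
  rw [add_sub_cancel, div_rpow hx hy.le, le_div_iff₀ (rpow_pos_of_pos hy p)] at h
  calc y ^ p + p * y ^ (p - 1) * (x - y) = (1 + p * (x / y - 1)) * y ^ p := by
        rw [rpow_sub_one hy.ne']; field_simp
    _ ≤ x ^ p := h

theorem rpow_le_tangent {p x y : ℝ} (hp₀ : 0 ≤ p) (hp₁ : p ≤ 1) (hy : 0 < y) (hx : 0 ≤ x) :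
    x ^ p ≤ y ^ p + p * y ^ (p - 1) * (x - y) := by
  have h := rpow_one_add_le_one_add_mul_self (s := x / y - 1)
    (by linarith [div_nonneg hx hy.le]) hp₀ hp₁
  rw [add_sub_cancel, div_rpow hx hy.le, div_le_iff₀ (rpow_pos_of_pos hy p)] at h
  calc x ^ p ≤ (1 + p * (x / y - 1)) * y ^ p := h
    _ = y ^ p + p * y ^ (p - 1) * (x - y) := by
        rw [rpow_sub_one hy.ne']; field_simp

def WeightEquivalent (v w : ℝ → ℝ) : Prop :=
  ∃ C₁ C₂ : ℝ, 0 < C₁ ∧ 0 < C₂ ∧ ∀ t : ℝ, 0 ≤ t → C₁ * v t ≤ w t ∧ w t ≤ C₂ * v t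

theorem IsWeight.weightEquivalent_of_forall_gt {v w : ℝ → ℝ} (hv : IsWeight v) (hw : IsWeight w)
    {T c₁ c₂ : ℝ} (hT : 0 ≤ T) (hc₁ : 0 < c₁) (hc₂ : 0 < c₂)
    (h : ∀ t, T < t → c₁ * v t ≤ w t ∧ w t ≤ c₂ * v t) : WeightEquivalent v w := by
  have hv₀ := hv.1 0 le_rfl
  have hvT := hv.1 T hT
  have hw₀ := hw.1 0 le_rfl
  refine ⟨min c₁ (w 0 / v T), max c₂ (w T / v 0), by positivity,
    lt_max_of_lt_left hc₂, fun t ht => ?_⟩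
  rcases le_or_gt t T with htT | hTt
  · have hvt : v t ≤ v T := hv.2.1 ht hT htT
    have hv0t : v 0 ≤ v t := hv.2.1 self_mem_Ici ht ht
    constructor
    · calc min c₁ (w 0 / v T) * v t ≤ w 0 / v T * v T := by
            gcongr
            · exact (hv.1 t ht).le
            · exact min_le_right _ _
        _ = w 0 := div_mul_cancel₀ _ hvT.ne'
        _ ≤ w t := hw.2.1 self_mem_Ici ht ht
    · calc w t ≤ w T := hw.2.1 ht hT htT
        _ = w T / v 0 * v 0 := (div_mul_cancel₀ _ hv₀.ne').symm
        _ ≤ max c₂ (w T / v 0) * v t := by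
            gcongr
            exact le_max_right _ _
  · obtain ⟨h₁, h₂⟩ := h t hTt
    have hvt := (hv.1 t ht).le
    exact ⟨le_trans (by gcongr; exact min_le_left _ _) h₁,
      h₂.trans (by gcongr; exact le_max_left _ _)⟩

noncomputable def supLines (E : Set ℕ) (b : ℕ → ℝ) (x : ℝ) : ℝ :=
  sSup ((fun j : ℕ => b j + j * x) '' E)

section supLines

variable {E : Set ℕ} {b : ℕ → ℝ}

theorem le_supLines (hbdd : ∀ x, BddAbove ((fun j : ℕ => b j + j * x) '' E)) {j : ℕ}
    (hj : j ∈ E) (x : ℝ) : b j + j * x ≤ supLines E b x :=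
  le_csSup (hbdd x) ⟨j, hj, rfl⟩

theorem supLines_le (hE : E.Nonempty) {x c : ℝ} (h : ∀ j ∈ E, b j + j * x ≤ c) :
    supLines E b x ≤ c :=
  csSup_le (hE.image _) (by rintro _ ⟨j, hj, rfl⟩; exact h j hj)

variable (hE : E.Nonempty) (hbdd : ∀ x, BddAbove ((fun j : ℕ => b j + j * x) '' E))
include hE hbdd

theorem monotone_supLines : Monotone (supLines E b) := fun x y hxy =>
  supLines_le hE fun j hj =>
    (by gcongr : b j + j * x ≤ b j + j * y).trans (le_supLines hbdd hj y)

theorem convexOn_supLines : ConvexOn ℝ univ (supLines E b) := by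
  refine ⟨convex_univ, fun x _ y _ s t hs ht hst => supLines_le hE fun j hj => ?_⟩
  calc b j + j * (s • x + t • y) = s * (b j + j * x) + t * (b j + j * y) := by
        simp only [smul_eq_mul]; linear_combination (-b j) * hst
    _ ≤ s • supLines E b x + t • supLines E b y := by
        simp only [smul_eq_mul]; gcongr <;> exact le_supLines hbdd hj _

theorem continuous_supLines : Continuous (supLines E b) :=
  continuousOn_univ.mp ((convexOn_supLines hE hbdd).continuousOn isOpen_univ)

end supLines

noncomputable def powTangentPoint (α : ℝ) (j : ℕ) : ℝ := ((j : ℝ) / α) ^ (α - 1)⁻¹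

noncomputable def powTangentIntercept (α : ℝ) (j : ℕ) : ℝ :=
  powTangentPoint α j ^ α - j * powTangentPoint α j

noncomputable def powTropical (α : ℝ) : ℝ → ℝ := supLines univ (powTangentIntercept α)

section powTropical

variable {α : ℝ} (hα : 1 < α)
include hα

theorem powTangentPoint_rpow_sub_one (j : ℕ) : powTangentPoint α j ^ (α - 1) = j / α :=
  rpow_inv_rpow (by have := hα; positivity) (by linarith)

theorem powTangentIntercept_zero : powTangentIntercept α 0 = 0 := by
  simp [powTangentIntercept, powTangentPoint, zero_rpow (inv_ne_zero (sub_ne_zero.2 hα.ne')),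
    zero_rpow (by linarith : α ≠ 0)]

theorem powTangentLine_le_rpow {x : ℝ} (hx : 0 ≤ x) (j : ℕ) :
    powTangentIntercept α j + j * x ≤ x ^ α := by
  rcases j.eq_zero_or_pos with rfl | hj
  · simpa [powTangentIntercept_zero hα] using rpow_nonneg hx α
  have hpos : 0 < powTangentPoint α j := by unfold powTangentPoint; have := hα; positivity
  have h := rpow_tangent_le hα.le hpos hx
  rw [powTangentPoint_rpow_sub_one hα, mul_div_cancel₀ _ (by linarith)] at h
  linarith [show powTangentIntercept α j + j * x
    = powTangentPoint α j ^ α + j * (x - powTangentPoint α j) by unfold powTangentIntercept; ring]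

theorem powTangentLine_le_max (x : ℝ) (j : ℕ) :
    powTangentIntercept α j + j * x ≤ max x 0 ^ α := by
  rcases le_total 0 x with hx | hx
  · rw [max_eq_left hx]; exact powTangentLine_le_rpow hα hx j
  · have h₀ := powTangentLine_le_rpow hα le_rfl j
    rw [mul_zero, add_zero] at h₀
    rw [max_eq_right hx]
    nlinarith [(Nat.cast_nonneg j : (0 : ℝ) ≤ j)]

theorem bddAbove_powTangentLines (x : ℝ) :
    BddAbove ((fun j : ℕ => powTangentIntercept α j + j * x) '' univ) :=
  ⟨max x 0 ^ α, by rintro _ ⟨j, -, rfl⟩; exact powTangentLine_le_max hα x j⟩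

theorem powTropical_nonneg (x : ℝ) : 0 ≤ powTropical α x := by
  have h := le_supLines (bddAbove_powTangentLines hα) (mem_univ 0) x
  rwa [powTangentIntercept_zero hα, Nat.cast_zero, zero_mul, add_zero] at h

theorem powTropical_le (x : ℝ) : powTropical α x ≤ max x 0 ^ α :=
  supLines_le univ_nonempty fun j _ => powTangentLine_le_max hα x j

theorem powTropical_eq_zero {x : ℝ} (hx : x ≤ 0) : powTropical α x = 0 :=
  le_antisymm (by simpa [hx, zero_rpow (by linarith : α ≠ 0)] using powTropical_le hα x)
    (powTropical_nonneg hα x)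

theorem rpow_le_powTropical_add_one (hα₂ : 2 ≤ α) {x : ℝ} (hx : 0 ≤ x) :
    x ^ α ≤ powTropical α x + 1 := by
  rcases hx.eq_or_lt with rfl | hx
  · rw [zero_rpow (by linarith)]; linarith [powTropical_nonneg hα 0]
  set s := α * x ^ (α - 1)
  set j := ⌊s⌋₊
  set y := powTangentPoint α j
  have hs : 0 ≤ s := by positivity
  have hjs : (j : ℝ) ≤ s := Nat.floor_le hs
  have hsj : s - j ≤ 1 := by linarith [Nat.lt_floor_add_one s]
  have hq₀ : 0 ≤ (α - 1)⁻¹ := inv_nonneg.2 (by linarith)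
  have hq₁ : (α - 1)⁻¹ ≤ 1 := inv_le_one_of_one_le₀ (by linarith)
  have hx_eq : x = (s / α) ^ (α - 1)⁻¹ := by
    rw [mul_div_cancel_left₀ _ (by linarith), rpow_rpow_inv hx.le (by linarith)]
  have hyx : y ≤ x := by
    rw [hx_eq]; exact rpow_le_rpow (by positivity) (by gcongr) hq₀
  -- `u ↦ u ^ (α - 1)⁻¹` is subadditive because `α ≥ 2`
  have hxy : x - y ≤ 1 := by
    have h := rpow_add_le_add_rpow (div_nonneg (Nat.cast_nonneg j) (by linarith : (0:ℝ) ≤ α))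
      (div_nonneg (sub_nonneg.2 hjs) (by linarith : (0:ℝ) ≤ α)) hq₀ hq₁
    rw [← add_div, add_sub_cancel, ← hx_eq] at h
    have : ((s - j) / α) ^ (α - 1)⁻¹ ≤ 1 :=
      rpow_le_one (by have := hα; positivity) ((div_le_one (by linarith)).2 (by linarith)) hq₀
    unfold y powTangentPoint; linarith
  have htangent : x ^ α + s * (y - x) ≤ y ^ α :=
    rpow_tangent_le hα.le hx (rpow_nonneg (by positivity) _)
  have hline := le_supLines (bddAbove_powTangentLines hα) (mem_univ j) x
  have hgap : (s - j) * (x - y) ≤ 1 := by nlinarith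
  have : powTangentIntercept α j + j * x = y ^ α + j * (x - y) := by
    unfold powTangentIntercept; ring
  unfold powTropical; nlinarith

theorem monotone_powTropical : Monotone (powTropical α) :=
  monotone_supLines univ_nonempty (bddAbove_powTangentLines hα)

theorem continuous_powTropical : Continuous (powTropical α) :=
  continuous_supLines univ_nonempty (bddAbove_powTangentLines hα)

end powTropical

noncomputable def tropicalPowerWeight (α t : ℝ) : ℝ := exp (powTropical α (log t))

section tropicalPowerWeight

variable {α : ℝ} (hα : 1 < α)
include hα

theorem tropicalPowerWeight_eq_max_one {t : ℝ} (ht : 0 ≤ t) :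
    tropicalPowerWeight α t = exp (powTropical α (log (max t 1))) := by
  rcases le_total t 1 with ht₁ | ht₁
  · rw [tropicalPowerWeight, max_eq_right ht₁, log_one, powTropical_eq_zero hα le_rfl,
      powTropical_eq_zero hα (log_nonpos ht ht₁)]
  · rw [tropicalPowerWeight, max_eq_left ht₁]

theorem isWeight_tropicalPowerWeight : IsWeight (tropicalPowerWeight α) := by
  -- unlike `log t`, `log (max t 1)` is continuous at `t = 0`
  have hlog : ∀ t ∈ Ici (0 : ℝ), tropicalPowerWeight α t = exp (powTropical α (log (max t 1))) :=
    fun t ht => tropicalPowerWeight_eq_max_one hα ht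
  refine ⟨fun t _ => exp_pos _, ?_, ?_, fun M => ?_⟩
  · intro s hs t ht hst
    rw [hlog s hs, hlog t ht, exp_le_exp]
    exact monotone_powTropical hα
      (log_le_log (by positivity) (max_le_max_right 1 hst))
  · refine ContinuousOn.congr ?_ hlog
    exact (continuous_exp.comp (continuous_powTropical hα)).comp_continuousOn
      ((continuous_id.max continuous_const).continuousOn.log fun t _ => by positivity)
  · have hline : ∀ x, powTangentIntercept α 1 + x ≤ powTropical α x := fun x => by
      have h := le_supLines (bddAbove_powTangentLines hα) (mem_univ 1) x
      rwa [Nat.cast_one, one_mul] at h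
    have htendsto : Tendsto (fun x => exp (powTropical α x)) atTop atTop :=
      tendsto_exp_atTop.comp (tendsto_atTop_mono hline
        (tendsto_atTop_add_const_left _ _ tendsto_id))
    obtain ⟨x, hx⟩ := (htendsto.eventually_gt_atTop M).exists
    exact ⟨exp x, (exp_pos x).le, by rwa [tropicalPowerWeight, log_exp]⟩

theorem logTropical_tropicalPowerWeight : LogTropical (tropicalPowerWeight α) :=
  ⟨univ, powTangentIntercept α, univ_nonempty, bddAbove_powTangentLines hα,
    fun x => by rw [tropicalPowerWeight, log_exp, log_exp]; rfl⟩

theorem weightEquivalent_tropicalPowerWeight (hα₂ : 2 ≤ α) {w : ℝ → ℝ} (hw : IsWeight w)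
    (hform : ∀ t : ℝ, exp 1 < t → w t = exp (log t ^ α)) :
    WeightEquivalent (tropicalPowerWeight α) w := by
  refine (isWeight_tropicalPowerWeight hα).weightEquivalent_of_forall_gt hw (exp_pos 1).le
    one_pos (exp_pos 1) fun t ht => ?_
  have hx : 0 ≤ log t := log_nonneg ((one_le_exp zero_le_one).trans ht.le)
  have hupper := powTropical_le hα (log t)
  rw [max_eq_left hx] at hupper
  rw [hform t ht, tropicalPowerWeight, one_mul, ← exp_add, exp_le_exp, exp_le_exp, add_comm 1]
  exact ⟨hupper, rpow_le_powTropical_add_one hα hα₂ hx⟩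

end tropicalPowerWeight

theorem exists_rpow_slope_window {α : ℝ} (hα : 1 < α) (hα₂ : α < 2) {H : ℝ} (hH : 0 < H)
    (X : ℝ) : ∃ x₀ : ℝ, ∃ j : ℕ, X ≤ x₀ - H ∧ (j : ℝ) + 1 / 4 ≤ α * (x₀ - H) ^ (α - 1) ∧
      α * (x₀ + H) ^ (α - 1) ≤ j + 3 / 4 := by
  have hq : 0 < α - 1 := by linarith
  have hα₀ : 0 < α := by linarith
  have hspread : ∀ᶠ y in atTop, α * ((α - 1) * y ^ (α - 1 - 1) * (2 * H)) ≤ 1 / 4 := by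
    have h := (tendsto_rpow_neg_atTop (by linarith : 0 < 2 - α)).const_mul (α * (α - 1) * (2 * H))
    rw [mul_zero, show -(2 - α) = α - 1 - 1 by ring] at h
    filter_upwards [h.eventually (eventually_le_nhds (by norm_num : (0 : ℝ) < 1 / 4))] with y hy
    linarith
  obtain ⟨Y, hY⟩ := eventually_atTop.1 (hspread.and (eventually_ge_atTop (max X 1)))
  obtain ⟨j, hj⟩ := exists_nat_ge (α * (max Y 0 + 2 * H) ^ (α - 1))
  set x₀ := (((j : ℝ) + 1 / 2) / α) ^ (α - 1)⁻¹
  have hslope : α * x₀ ^ (α - 1) = j + 1 / 2 := by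
    rw [rpow_inv_rpow (by positivity) hq.ne']; field_simp
  have hx₀ : max Y 0 + 2 * H ≤ x₀ := by
    refine (rpow_le_rpow_iff (by positivity) (by positivity) hq).1 (le_of_mul_le_mul_left ?_ hα₀)
    linarith
  obtain ⟨hspr, hX⟩ := hY (x₀ - H) (by linarith [le_max_left Y 0])
  have hpos : 0 < x₀ - H := by linarith [le_max_right X 1]
  have htangent := mul_le_mul_of_nonneg_left
    (rpow_le_tangent hq.le (by linarith) hpos (by linarith : 0 ≤ x₀ + H)) hα₀.le
  have hmono₁ : (x₀ - H) ^ (α - 1) ≤ x₀ ^ (α - 1) := rpow_le_rpow hpos.le (by linarith) hq.le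
  have hmono₂ : x₀ ^ (α - 1) ≤ (x₀ + H) ^ (α - 1) :=
    rpow_le_rpow (by linarith) (by linarith) hq.le
  refine ⟨x₀, j, (le_max_left X 1).trans hX, ?_, ?_⟩ <;> nlinarith

theorem min_rpow_sub_line_add_le {p H x₀ c : ℝ} {j m : ℕ} (hp : 1 ≤ p) (hH : 0 ≤ H)
    (hx₀ : H < x₀) (hlow : (j : ℝ) + 1 / 4 ≤ p * (x₀ - H) ^ (p - 1))
    (hhigh : p * (x₀ + H) ^ (p - 1) ≤ j + 3 / 4) :
    min ((x₀ - H) ^ p - (c + m * (x₀ - H))) ((x₀ + H) ^ p - (c + m * (x₀ + H))) + H / 4 ≤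
      x₀ ^ p - (c + m * x₀) := by
  rcases le_or_gt m j with hmj | hjm
  · have htangent := rpow_tangent_le hp (sub_pos.2 hx₀) (by linarith : 0 ≤ x₀)
    have hm : (m : ℝ) + 1 / 4 ≤ p * (x₀ - H) ^ (p - 1) := by
      linarith [(Nat.cast_le (α := ℝ)).2 hmj]
    have := mul_le_mul_of_nonneg_right hm hH
    have := min_le_left ((x₀ - H) ^ p - (c + m * (x₀ - H))) ((x₀ + H) ^ p - (c + m * (x₀ + H)))
    nlinarith
  · have htangent := rpow_tangent_le hp (by linarith : 0 < x₀ + H) (by linarith : 0 ≤ x₀)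
    have hm : p * (x₀ + H) ^ (p - 1) ≤ m - 1 / 4 := by
      have : (j : ℝ) + 1 ≤ m := by exact_mod_cast hjm
      linarith
    have := mul_le_mul_of_nonneg_right hm hH
    have := min_le_right ((x₀ - H) ^ p - (c + m * (x₀ - H))) ((x₀ + H) ^ p - (c + m * (x₀ + H)))
    nlinarith

theorem not_forall_rpow_sub_supLines_mem_Icc {α : ℝ} (hα : 1 < α) (hα₂ : α < 2) {E : Set ℕ}
    {b : ℕ → ℝ} (hE : E.Nonempty) (hbdd : ∀ x, BddAbove ((fun j : ℕ => b j + j * x) '' E))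
    (A B : ℝ) : ¬ ∀ x, 1 < x → x ^ α - supLines E b x ∈ Icc A B := by
  intro hAB
  set H := 4 * (|B - A| + 1)
  have hH : 0 < H := by positivity
  obtain ⟨x₀, j, hx₀, hlow, hhigh⟩ := exists_rpow_slope_window hα hα₂ hH 2
  obtain ⟨_, ⟨m, hm, rfl⟩, hnear⟩ :=
    exists_lt_of_lt_csSup (hE.image _) (sub_one_lt (supLines E b x₀))
  have hgap : ∀ y, 1 < y → A ≤ y ^ α - (b m + m * y) := fun y hy => by
    linarith [(hAB y hy).1, le_supLines hbdd hm y]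
  have hwindow := min_rpow_sub_line_add_le (c := b m) (m := m) hα.le hH.le (by linarith) hlow hhigh
  have := le_min (hgap (x₀ - H) (by linarith)) (hgap (x₀ + H) (by linarith))
  have := (hAB x₀ (by linarith)).2
  have := le_abs_self (B - A)
  beta_reduce at hnear
  linarith

theorem LogTropical.not_weightEquivalent {α : ℝ} (hα : 1 < α) (hα₂ : α < 2) {v w : ℝ → ℝ}
    (hv : IsWeight v) (hvt : LogTropical v) (hform : ∀ t, exp 1 < t → w t = exp (log t ^ α)) :
    ¬ WeightEquivalent v w := by
  rintro ⟨C₁, C₂, hC₁, hC₂, hvw⟩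
  obtain ⟨E, b, hE, hbdd, hlog⟩ := hvt
  refine not_forall_rpow_sub_supLines_mem_Icc hα hα₂ hE hbdd (log C₁) (log C₂) fun x hx => ?_
  have hvx := hv.1 _ (exp_pos x).le
  obtain ⟨h₁, h₂⟩ := hvw (exp x) (exp_pos x).le
  rw [hform _ (exp_lt_exp.2 hx)] at h₁ h₂
  have h₁ := log_le_log (by positivity) h₁
  have h₂ := log_le_log (exp_pos _) h₂
  rw [log_mul hC₁.ne' hvx.ne', log_exp, log_exp] at h₁
  rw [log_mul hC₂.ne' hvx.ne', log_exp, log_exp] at h₂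
  rw [supLines, ← hlog x]
  constructor <;> linarith

/-- Let `w` be a weight function with `w(t) = exp((log t)^α)` for
`t > e`, where `α > 1`. If `α ≥ 2` then `w` is equivalent to a log-tropical weight
function, while if `1 < α < 2` it is not. -/
theorem example_log_power_weight (α : ℝ) (hα : 1 < α) (w : ℝ → ℝ) (hw : IsWeight w)
    (hform : ∀ t : ℝ, Real.exp 1 < t → w t = Real.exp (Real.log t ^ α)) :
    (2 ≤ α →
      ∃ v : ℝ → ℝ, IsWeight v ∧ LogTropical v ∧
        ∃ C₁ C₂ : ℝ, 0 < C₁ ∧ 0 < C₂ ∧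
          ∀ t : ℝ, 0 ≤ t → C₁ * v t ≤ w t ∧ w t ≤ C₂ * v t) ∧
    (α < 2 →
      ¬ ∃ v : ℝ → ℝ, IsWeight v ∧ LogTropical v ∧
          ∃ C₁ C₂ : ℝ, 0 < C₁ ∧ 0 < C₂ ∧
            ∀ t : ℝ, 0 ≤ t → C₁ * v t ≤ w t ∧ w t ≤ C₂ * v t) := by
  refine ⟨fun hα₂ => ⟨tropicalPowerWeight α, isWeight_tropicalPowerWeight hα,
    logTropical_tropicalPowerWeight hα, weightEquivalent_tropicalPowerWeight hα hα₂ hw hform⟩,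
    fun hα₂ => ?_⟩
  rintro ⟨v, hv, hvt, hvw⟩
  exact hvt.not_weightEquivalent hα hα₂ hv hform hvw
end

section
/- A non-rapid log-convex weight on ℂ is approximable by a holomorphic map if and only if it is equivalent to 1 + t^m for some positive integer m: if w : [0,∞)→(0,∞) is log-convex, non-decreasing, continuous, unbounded, and lim_{t→∞} t^{-k} w(t) < ∞ for some k ∈ ℕ, then w ∈ ℂ_app iff w(t) ≍ 1 + t^m for some m ∈ ℕ. -/
/-!
An entire function whose modulus grows at most like `|z|^k` is a polynomial of degree `≤ k`
(Liouville's theorem, applied inductively to `dslope f 0`). The non-rapid growth of `w` therefore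
forces every component of an approximating map to be a polynomial, and a finite sum `∑ |Pᵢ(z)|`
is comparable at infinity to `|z|^m`, `m` the largest degree. Monotonicity of `w` and `w(0) > 0`
turn this asymptotic comparison into a global one, and unboundedness of `w` gives `m ≥ 1`.
Conversely `|1| + |z^m| = 1 + |z|^m`.
-/

open Polynomial Filter Asymptotics Bornology Set

theorem Differentiable.exists_polynomial_eq_of_isBigO_pow {f : ℂ → ℂ} (hf : Differentiable ℂ f)
    {k : ℕ} (hk : f =O[cobounded ℂ] (· ^ k)) :
    ∃ p : ℂ[X], p.natDegree ≤ k ∧ ∀ z, f z = p.eval z := by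
  induction k generalizing f with
  | zero =>
    have hb : IsBounded (range f) := by
      rw [hf.continuous.isBounded_range_iff_isBigO, ← Metric.cobounded_eq_cocompact]
      exact (hk.congr_right pow_zero).trans (isBigO_const_const (1 : ℂ) one_ne_zero _)
    obtain ⟨c, hc⟩ := hf.exists_const_forall_eq_of_bounded hb
    exact ⟨C c, by simp, fun z => by simp [hc z]⟩
  | succ k ih =>
    have hg : Differentiable ℂ (dslope f 0) := fun z => by
      rcases eq_or_ne z 0 with rfl | hz
      · obtain ⟨p, hp⟩ := hf.analyticAt (0 : ℂ)
        exact hp.has_fpower_series_dslope_fslope.analyticAt.differentiableAt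
      · exact (differentiableAt_dslope_of_ne hz).mpr (hf z)
    have hconst : (fun _ => f 0) =O[cobounded ℂ] (· ^ (k + 1)) := by
      simpa using
        (isBigO_pow_pow_cobounded_of_le (R := ℂ) (Nat.zero_le (k + 1))).const_mul_left (f 0)
    have hgk : dslope f 0 =O[cobounded ℂ] (· ^ k) := by
      refine ((isBigO_refl (fun z : ℂ => z⁻¹) _).mul (hk.sub hconst)).congr' ?_ ?_
      · filter_upwards [eventually_ne_cobounded 0] with z hz
        simp [dslope_of_ne f hz, slope_def_module]
      · filter_upwards [eventually_ne_cobounded 0] with z hz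
        field_simp
        ring
    obtain ⟨p, hpk, hp⟩ := ih hg hgk
    refine ⟨C (f 0) + X * p, ?_, fun z => ?_⟩
    · refine (natDegree_add_le _ _).trans (max_le (by simp) ?_)
      exact natDegree_mul_le.trans (by simp; omega)
    · have := sub_smul_dslope f 0 z
      simp only [sub_zero, smul_eq_mul] at this
      simp [← hp, this]

namespace Polynomial

variable {𝕜 : Type*} [NormedField 𝕜]

theorem isTheta_cobounded_pow_natDegree {P : 𝕜[X]} (hP : P ≠ 0) :
    (P.eval ·) =Θ[cobounded 𝕜] (· ^ P.natDegree) :=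
  isEquivalent_cobounded_leading_monomial.isTheta.trans
    ((isTheta_const_mul_left (leadingCoeff_ne_zero.2 hP)).2 (isTheta_refl _ _))

theorem exists_isTheta_cobounded_sum_norm_eval {ι : Type*} [Fintype ι] (P : ι → 𝕜[X]) :
    ∃ p : 𝕜[X], (fun z => ∑ i, ‖(P i).eval z‖) =Θ[cobounded 𝕜] (p.eval ·) := by
  cases isEmpty_or_nonempty ι
  · exact ⟨0, by simp; rfl⟩
  obtain ⟨j, -, hj⟩ :=
    Finset.exists_max_image Finset.univ (fun i => (P i).degree) Finset.univ_nonempty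
  refine ⟨P j, IsBigO.fun_sum fun i _ =>
    (isBigO_cobounded_of_degree_le (hj i (Finset.mem_univ i))).norm_left,
    isBigO_of_le _ fun z => ?_⟩
  rw [Real.norm_of_nonneg (Finset.sum_nonneg fun i _ => norm_nonneg _)]
  exact Finset.single_le_sum (f := fun i => ‖(P i).eval z‖) (fun i _ => norm_nonneg _)
    (Finset.mem_univ j)

end Polynomial

theorem isTheta_of_forall_mul_le_of_le {α : Type*} {l : Filter α} {f g : α → ℝ} {C₁ C₂ : ℝ}
    (hC₁ : 0 < C₁) (hg : ∀ x, 0 ≤ g x) (h : ∀ x, C₁ * g x ≤ f x ∧ f x ≤ C₂ * g x) :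
    f =Θ[l] g := by
  have hf (x : α) : 0 ≤ f x := (mul_nonneg hC₁.le (hg x)).trans (h x).1
  refine ⟨.of_bound C₂ (.of_forall fun x => ?_), .of_bound C₁⁻¹ (.of_forall fun x => ?_)⟩
  · simpa only [Real.norm_of_nonneg (hf x), Real.norm_of_nonneg (hg x)] using (h x).2
  · simpa only [Real.norm_of_nonneg (hf x), Real.norm_of_nonneg (hg x), le_inv_mul_iff₀ hC₁]
      using (h x).1

theorem isTheta_atTop_one_add_pow (m : ℕ) : (fun t : ℝ => 1 + t ^ m) =Θ[atTop] (· ^ m) := by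
  refine ⟨IsBigO.add ?_ (isBigO_refl _ _), IsBigO.of_bound 1 ?_⟩
  · refine IsBigO.of_bound 1 ?_
    filter_upwards [eventually_ge_atTop 1] with t ht
    simpa [abs_of_nonneg (zero_le_one.trans ht)] using one_le_pow₀ ht
  · filter_upwards [eventually_ge_atTop 0] with t ht
    have := pow_nonneg ht m
    rw [Real.norm_of_nonneg this, Real.norm_of_nonneg (by positivity)]
    linarith

theorem MonotoneOn.exists_le_mul_of_isBigO {u v : ℝ → ℝ} (hu : MonotoneOn u (Ici 0)) {δ : ℝ}
    (hδ : 0 < δ) (hv : ∀ t, 0 ≤ t → δ ≤ v t) (huv : u =O[atTop] v) :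
    ∃ C > 0, ∀ t, 0 ≤ t → u t ≤ C * v t := by
  obtain ⟨c, hc, hcuv⟩ := huv.exists_pos
  obtain ⟨R, hR⟩ := eventually_atTop.1 hcuv.bound
  set R' := max R 0
  refine ⟨max c (|u R'| / δ), lt_max_of_lt_left hc, fun t ht => ?_⟩
  have hvt : 0 ≤ v t := hδ.le.trans (hv t ht)
  rcases le_total R' t with hRt | htR
  · calc u t ≤ ‖u t‖ := le_abs_self _
      _ ≤ c * ‖v t‖ := hR t (le_of_max_le_left hRt)
      _ ≤ max c (|u R'| / δ) * v t := by
        rw [Real.norm_of_nonneg hvt]; gcongr; exact le_max_left _ _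
  · calc u t ≤ u R' := hu ht (mem_Ici.2 (le_max_right _ _)) htR
      _ ≤ |u R'| / δ * δ := by rw [div_mul_cancel₀ _ hδ.ne']; exact le_abs_self _
      _ ≤ max c (|u R'| / δ) * v t := by gcongr; exacts [le_max_right _ _, hv t ht]

theorem MonotoneOn.exists_bounds_one_add_pow_of_isTheta {w : ℝ → ℝ} (hw : MonotoneOn w (Ici 0))
    (hw0 : 0 < w 0) {m : ℕ} (h : w =Θ[atTop] (· ^ m)) :
    ∃ C₁ C₂ : ℝ, 0 < C₁ ∧ 0 < C₂ ∧
      ∀ t, 0 ≤ t → C₁ * (1 + t ^ m) ≤ w t ∧ w t ≤ C₂ * (1 + t ^ m) := by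
  have h' := h.trans (isTheta_atTop_one_add_pow m).symm
  have hpow : MonotoneOn (fun t : ℝ => 1 + t ^ m) (Ici 0) := fun a ha _ _ hab => by
    dsimp only; gcongr
  obtain ⟨C₂, hC₂, hup⟩ := hw.exists_le_mul_of_isBigO one_pos
    (fun t ht => le_add_of_nonneg_right (pow_nonneg ht m)) h'.1
  obtain ⟨C, hC, hlow⟩ := hpow.exists_le_mul_of_isBigO hw0 (fun t ht => hw self_mem_Ici ht ht) h'.2
  exact ⟨C⁻¹, C₂, inv_pos.2 hC, hC₂, fun t ht => ⟨(inv_mul_le_iff₀ hC).2 (hlow t ht), hup t ht⟩⟩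

theorem isTheta_atTop_of_isTheta_cobounded_norm {w : ℝ → ℝ} {m : ℕ}
    (h : (fun z : ℂ => w ‖z‖) =Θ[cobounded ℂ] (· ^ m)) : w =Θ[atTop] (· ^ m) := by
  have hreal := RCLike.tendsto_ofReal_atTop_cobounded ℂ
  have hw : (fun t : ℝ => w ‖(t : ℂ)‖) =Θ[atTop] (fun t : ℝ => (t : ℂ) ^ m) :=
    ⟨h.1.comp_tendsto hreal, h.2.comp_tendsto hreal⟩
  have hnorm : w =ᶠ[atTop] fun t : ℝ => w ‖(t : ℂ)‖ := by
    filter_upwards [eventually_ge_atTop 0] with t ht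
    simp [abs_of_nonneg ht]
  exact hnorm.trans_isTheta (hw.trans (.of_norm_eventuallyEq_norm (.of_forall fun t => by simp)))

theorem exists_isTheta_pow_of_sum_norm_isTheta {ι : Type*} [Fintype ι] {f : ι → ℂ → ℂ}
    (hf : ∀ i, Differentiable ℂ (f i)) {w : ℝ → ℝ} (hw : Tendsto w atTop atTop) {k : ℕ}
    (hk : w =O[atTop] (· ^ k))
    (hfw : (fun z => ∑ i, ‖f i z‖) =Θ[cobounded ℂ] (fun z => w ‖z‖)) :
    ∃ m, 1 ≤ m ∧ w =Θ[atTop] (· ^ m) := by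
  have hWk : (fun z : ℂ => w ‖z‖) =O[cobounded ℂ] (· ^ k) :=
    (hk.comp_tendsto tendsto_norm_cobounded_atTop).trans (isBigO_of_le _ fun z => by simp)
  have hfk (i : ι) : f i =O[cobounded ℂ] (· ^ k) := by
    refine ((isBigO_of_le _ fun z => ?_).trans hfw.1).trans hWk
    rw [Real.norm_of_nonneg (Finset.sum_nonneg fun i _ => norm_nonneg _)]
    exact Finset.single_le_sum (f := fun i => ‖f i z‖) (fun i _ => norm_nonneg _)
      (Finset.mem_univ i)
  choose P _ hP using fun i => (hf i).exists_polynomial_eq_of_isBigO_pow (hfk i)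
  obtain ⟨p, hp⟩ := exists_isTheta_cobounded_sum_norm_eval P
  have hWp : (fun z : ℂ => w ‖z‖) =Θ[cobounded ℂ] (p.eval ·) :=
    hfw.symm.trans (by simpa [hP] using hp)
  have hW_top : Tendsto (fun z : ℂ => w ‖z‖) (cobounded ℂ) atTop :=
    hw.comp tendsto_norm_cobounded_atTop
  have hm : 1 ≤ p.natDegree := by
    by_contra! hdeg
    rw [eq_C_of_natDegree_eq_zero (Nat.lt_one_iff.1 hdeg)] at hWp
    simp only [eval_C] at hWp
    exact not_isBoundedUnder_of_tendsto_atTop (tendsto_norm_atTop_atTop.comp hW_top)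
      hWp.1.isBoundedUnder_le
  have hp0 : p ≠ 0 := by rintro rfl; simp at hm
  refine ⟨p.natDegree, hm, ?_⟩
  exact isTheta_atTop_of_isTheta_cobounded_norm (hWp.trans (isTheta_cobounded_pow_natDegree hp0))

theorem exists_differentiable_sum_norm_eq_one_add_pow (m : ℕ) :
    ∃ f : Fin 2 → ℂ → ℂ, (∀ i, Differentiable ℂ (f i)) ∧ ∀ z, ∑ i, ‖f i z‖ = 1 + ‖z‖ ^ m :=
  ⟨![fun _ => 1, (· ^ m)], fun i => by fin_cases i <;> simp,
    fun z => by simp [Fin.sum_univ_two]⟩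

theorem nonrapid_approximable_iff_polynomial_weight_general (w : ℝ → ℝ)
    (hwpos : ∀ t : ℝ, 0 ≤ t → 0 < w t)
    (hmono : MonotoneOn w (Set.Ici 0))
    (hunb : ∀ M : ℝ, ∃ t : ℝ, 0 ≤ t ∧ M < w t)
    (hnonrapid : ∃ k : ℕ, ∃ M : ℝ, ∀ t : ℝ, 1 ≤ t → w t ≤ M * t ^ k) :
    (∃ (n : ℕ) (f : Fin n → ℂ → ℂ), (∀ i, Differentiable ℂ (f i)) ∧
        ∃ C₁ C₂ : ℝ, 0 < C₁ ∧ 0 < C₂ ∧ ∀ z : ℂ,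
          C₁ * w (‖z‖) ≤ (∑ i, ‖f i z‖) ∧
          (∑ i, ‖f i z‖) ≤ C₂ * w (‖z‖)) ↔
      ∃ m : ℕ, 1 ≤ m ∧ ∃ C₁ C₂ : ℝ, 0 < C₁ ∧ 0 < C₂ ∧
        ∀ t : ℝ, 0 ≤ t → C₁ * (1 + t ^ m) ≤ w t ∧ w t ≤ C₂ * (1 + t ^ m) := by
  constructor
  · rintro ⟨n, f, hf, C₁, C₂, hC₁, -, hfw⟩
    obtain ⟨k, M, hk⟩ := hnonrapid
    have hw_top : Tendsto w atTop atTop := tendsto_atTop_atTop.2 fun b =>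
      let ⟨t, ht0, ht⟩ := hunb b
      ⟨t, fun s hs => ht.le.trans (hmono ht0 (ht0.trans hs) hs)⟩
    have hwk : w =O[atTop] (· ^ k) := .of_bound M <| by
      filter_upwards [eventually_ge_atTop 1] with t ht
      rw [Real.norm_of_nonneg (hwpos t (zero_le_one.trans ht)).le,
        Real.norm_of_nonneg (pow_nonneg (zero_le_one.trans ht) k)]
      exact hk t ht
    have hsum : (fun z => ∑ i, ‖f i z‖) =Θ[cobounded ℂ] (fun z => w ‖z‖) :=
      isTheta_of_forall_mul_le_of_le hC₁ (fun z => (hwpos _ (norm_nonneg z)).le) hfw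
    obtain ⟨m, hm, hwm⟩ := exists_isTheta_pow_of_sum_norm_isTheta hf hw_top hwk hsum
    exact ⟨m, hm, hmono.exists_bounds_one_add_pow_of_isTheta (hwpos 0 le_rfl) hwm⟩
  · rintro ⟨m, -, C₁, C₂, hC₁, hC₂, hw⟩
    obtain ⟨f, hf, hsum⟩ := exists_differentiable_sum_norm_eq_one_add_pow m
    refine ⟨2, f, hf, C₂⁻¹, C₁⁻¹, inv_pos.2 hC₂, inv_pos.2 hC₁, fun z => ?_⟩
    rw [hsum, inv_mul_le_iff₀ hC₂, le_inv_mul_iff₀ hC₁]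
    exact (hw ‖z‖ (norm_nonneg z)).symm

/-- A non-rapid log-convex weight `w` on `[0,∞)` is approximable by a
holomorphic map `ℂ → ℂⁿ` (i.e. `∑ |fᵢ(z)| ≍ w(|z|)` for some entire `f₁,…,f_n`) if and
only if `w(t) ≍ 1 + t^m` for some positive integer `m`. -/
theorem nonrapid_approximable_iff_polynomial_weight (w : ℝ → ℝ)
    (hwpos : ∀ t : ℝ, 0 ≤ t → 0 < w t)
    (hmono : MonotoneOn w (Set.Ici 0)) (hcont : ContinuousOn w (Set.Ici 0))
    (hunb : ∀ M : ℝ, ∃ t : ℝ, 0 ≤ t ∧ M < w t)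
    (hconv : ConvexOn ℝ Set.univ (fun x : ℝ => Real.log (w (Real.exp x))))
    (hnonrapid : ∃ k : ℕ, ∃ M : ℝ, ∀ t : ℝ, 1 ≤ t → w t ≤ M * t ^ k) :
    (∃ (n : ℕ) (f : Fin n → ℂ → ℂ), (∀ i, Differentiable ℂ (f i)) ∧
        ∃ C₁ C₂ : ℝ, 0 < C₁ ∧ 0 < C₂ ∧ ∀ z : ℂ,
          C₁ * w (‖z‖) ≤ (∑ i, ‖f i z‖) ∧
          (∑ i, ‖f i z‖) ≤ C₂ * w (‖z‖)) ↔
      ∃ m : ℕ, 1 ≤ m ∧ ∃ C₁ C₂ : ℝ, 0 < C₁ ∧ 0 < C₂ ∧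
        ∀ t : ℝ, 0 ≤ t → C₁ * (1 + t ^ m) ≤ w t ∧ w t ≤ C₂ * (1 + t ^ m) :=
  nonrapid_approximable_iff_polynomial_weight_general w hwpos hmono hunb hnonrapid
end
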